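/- arXiv:1401.6516 — 12 statements merged into one kernel-verified Lean document; each statement's English description precedes it below -/
import Mathlib

section
/- Let n ≥ k ≥ 1 and let X be an (n,k) right Gog trapezoid. Define the array X̂ of size n by X̂_{i,j} = X_{i,j} for indices in the trapezoid (i−j ≤ k−1) and X̂_{i,j} = j for n ≥ i ≥ j+k. Then X̂ is a Gog triangle of size n, and it is the minimal Gog triangle extending X: for every Gog triangle Y of size n whose restriction to the indices with i−j ≤ k−1 equals X, one has X̂_{i,j} ≤ Y_{i,j} for all n ≥ i ≥ j ≥ 1. -/
/-- A Gelfand-Tsetlin triangle of size `n`: a triangular array of positive integers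
`X i j` for `n ≥ i ≥ j ≥ 1` with `X (i+1) j ≤ X i j ≤ X (i+1) (j+1)`. -/
def IsGT (n : ℕ) (X : ℕ → ℕ → ℤ) : Prop :=
  (∀ i j, 1 ≤ j → j ≤ i → i ≤ n → 1 ≤ X i j) ∧
  (∀ i j, 1 ≤ j → j ≤ i → i + 1 ≤ n → X (i+1) j ≤ X i j ∧ X i j ≤ X (i+1) (j+1))

/-- A Gog triangle of size `n`: a Gelfand-Tsetlin triangle with strictly increasing
rows and top row `X n j = j`. -/
def IsGog (n : ℕ) (X : ℕ → ℕ → ℤ) : Prop :=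
  IsGT n X ∧
  (∀ i j, 1 ≤ j → j + 1 ≤ i → i ≤ n → X i j < X i (j+1)) ∧
  (∀ j, 1 ≤ j → j ≤ n → X n j = (j : ℤ))

/-- A Magog triangle of size `n`. -/
def IsMagog (n : ℕ) (X : ℕ → ℕ → ℤ) : Prop :=
  IsGT n X ∧ ∀ j, 1 ≤ j → j ≤ n → X j j ≤ (j : ℤ)

/-- A GOGAm triangle of size `n`, characterized by the family of inequalities. -/
def IsGogam (n : ℕ) (X : ℕ → ℕ → ℤ) : Prop :=
  IsGT n X ∧ X n n ≤ (n : ℤ) ∧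
  ∀ k : ℕ, 1 ≤ k → k ≤ n - 1 →
    ∀ j : ℕ → ℕ, j 0 = n → (∀ i, i < n - k → j (i+1) < j i) → 1 ≤ j (n - k) →
      (∑ i ∈ Finset.range (n - k),
        (X (j i + i) (j i) - X (j (i+1) + i) (j (i+1))))
        + X (j (n-k) + (n-k)) (j (n-k)) ≤ (k : ℤ)

/-- The number of inversions of `X` (pairs `(i,j)` with `X i j = X (i+1) j`). -/
noncomputable def invCount (n : ℕ) (X : ℕ → ℕ → ℤ) : ℕ :=
  Set.ncard {p : ℕ × ℕ | 1 ≤ p.2 ∧ p.2 ≤ p.1 ∧ p.1 + 1 ≤ n ∧ X p.1 p.2 = X (p.1+1) p.2}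

/-- The number of coinversions of `X` (pairs `(i,j)` with `X i j = X (i+1) (j+1)`). -/
noncomputable def coinvCount (n : ℕ) (X : ℕ → ℕ → ℤ) : ℕ :=
  Set.ncard {p : ℕ × ℕ | 1 ≤ p.2 ∧ p.2 ≤ p.1 ∧ p.1 + 1 ≤ n ∧ X p.1 p.2 = X (p.1+1) (p.2+1)}

/-!
Every entry of a Gog triangle satisfies `j ≤ Y i j`, since the rows start at a positive value and
increase strictly. Hence replacing all entries with `i ≥ j + k` of a Gog triangle by their lower
bound `j` keeps all defining inequalities, and at the boundary `i = j + k` the ones that mix old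
and new entries are exactly instances of `j ≤ Y i j`. The completion of a trapezoid only depends
on the trapezoid, and it is below every extension by the same bound.
-/

/-- The paper's `X̂`. -/
def trapezoidCompletion (k : ℕ) (X : ℕ → ℕ → ℤ) : ℕ → ℕ → ℤ :=
  fun i j => if i < j + k then X i j else (j : ℤ)

namespace IsGog

variable {n : ℕ} {Y : ℕ → ℕ → ℤ}

theorem le_apply (hY : IsGog n Y) {i j : ℕ} (hj : 1 ≤ j) (hji : j ≤ i) (hin : i ≤ n) :
    (j : ℤ) ≤ Y i j := by
  induction j, hj using Nat.le_induction with
  | base => simpa using hY.1.1 i 1 le_rfl hji hin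
  | succ j hj ih =>
    have := hY.2.1 i j hj hji hin
    have := ih (by omega)
    omega

theorem congr (hY : IsGog n Y) {Z : ℕ → ℕ → ℤ}
    (hZY : ∀ i j, 1 ≤ j → j ≤ i → i ≤ n → Z i j = Y i j) : IsGog n Z := by
  refine ⟨⟨fun i j h1 h2 h3 => ?_, fun i j h1 h2 h3 => ?_⟩, fun i j h1 h2 h3 => ?_,
    fun j h1 h2 => ?_⟩
  · rw [hZY i j h1 h2 h3]
    exact hY.1.1 i j h1 h2 h3
  · rw [hZY i j h1 h2 (by omega), hZY (i+1) j h1 (by omega) h3,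
      hZY (i+1) (j+1) (by omega) (by omega) h3]
    exact hY.1.2 i j h1 h2 h3
  · rw [hZY i j h1 (by omega) h3, hZY i (j+1) (by omega) h2 h3]
    exact hY.2.1 i j h1 h2 h3
  · rw [hZY n j h1 h2 le_rfl]
    exact hY.2.2 j h1 h2

theorem trapezoidCompletion (hY : IsGog n Y) (k : ℕ) :
    IsGog n (trapezoidCompletion k Y) := by
  unfold _root_.trapezoidCompletion
  refine ⟨⟨fun i j h1 h2 h3 => ?_, fun i j h1 h2 h3 => ?_⟩, fun i j h1 h2 h3 => ?_,
    fun j h1 h2 => ?_⟩ <;> beta_reduce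
  · have := hY.1.1 i j h1 h2 h3
    split_ifs <;> omega
  · have := hY.1.2 i j h1 h2 h3
    have := hY.le_apply h1 h2 (by omega)
    split_ifs <;> omega
  · have := hY.2.1 i j h1 h2 h3
    have := hY.le_apply (j := j + 1) (by omega) h2 h3
    split_ifs <;> omega
  · have := hY.2.2 j h1 h2
    split_ifs <;> omega

theorem trapezoidCompletion_le (hY : IsGog n Y) {k : ℕ} {X : ℕ → ℕ → ℤ}
    (hYX : ∀ i j, 1 ≤ j → j ≤ i → i ≤ n → i < j + k → Y i j = X i j)
    {i j : ℕ} (h1 : 1 ≤ j) (h2 : j ≤ i) (h3 : i ≤ n) :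
    _root_.trapezoidCompletion k X i j ≤ Y i j := by
  unfold _root_.trapezoidCompletion
  split_ifs with h
  · exact (hYX i j h1 h2 h3 h).ge
  · exact hY.le_apply h1 h2 h3

end IsGog

theorem stmt0_general (n k : ℕ) (X : ℕ → ℕ → ℤ)
    (hX : ∃ Y : ℕ → ℕ → ℤ, IsGog n Y ∧
      ∀ i j, 1 ≤ j → j ≤ i → i ≤ n → i < j + k → X i j = Y i j) :
    IsGog n (fun i j => if i < j + k then X i j else (j : ℤ)) ∧
    ∀ Y : ℕ → ℕ → ℤ, IsGog n Y →
      (∀ i j, 1 ≤ j → j ≤ i → i ≤ n → i < j + k → Y i j = X i j) →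
      ∀ i j, 1 ≤ j → j ≤ i → i ≤ n →
        (if i < j + k then X i j else (j : ℤ)) ≤ Y i j := by
  obtain ⟨Y, hY, hXY⟩ := hX
  refine ⟨(hY.trapezoidCompletion k).congr fun i j h1 h2 h3 => ?_,
    fun W hW hWX i j h1 h2 h3 => hW.trapezoidCompletion_le hWX h1 h2 h3⟩
  simp only [trapezoidCompletion]
  split_ifs with h
  · exact hXY i j h1 h2 h3 h
  · rfl

/-- Minimal completion of an `(n,k)` right Gog trapezoid: filling with `j`'s gives the
smallest Gog triangle of size `n` extending it. -/
theorem stmt0 (n k : ℕ) (hk1 : 1 ≤ k) (hkn : k ≤ n) (X : ℕ → ℕ → ℤ)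
    (hX : ∃ Y : ℕ → ℕ → ℤ, IsGog n Y ∧
      ∀ i j, 1 ≤ j → j ≤ i → i ≤ n → i < j + k → X i j = Y i j) :
    IsGog n (fun i j => if i < j + k then X i j else (j : ℤ)) ∧
    ∀ Y : ℕ → ℕ → ℤ, IsGog n Y →
      (∀ i j, 1 ≤ j → j ≤ i → i ≤ n → i < j + k → Y i j = X i j) →
      ∀ i j, 1 ≤ j → j ≤ i → i ≤ n →
        (if i < j + k then X i j else (j : ℤ)) ≤ Y i j :=
  stmt0_general n k X hX
end

section
/- Let n ≥ k ≥ 1 and let X be an (n,k) left Gog trapezoid. Define the array X̂ of size n by X̂_{i,j} = X_{i,j} for j ≤ k and, for n ≥ i ≥ j > k, X̂_{i,j} = max(X_{i,k}+j−k, X_{i−1,k}+j−k−1, …, X_{i−j+k,k}) = max_{0 ≤ t ≤ j−k} (X_{i−t,k} + j−k−t). Then X̂ is a Gog triangle of size n, and it is the minimal Gog triangle extending X: for every Gog triangle Y of size n whose restriction to the indices with j ≤ k equals X, one has X̂_{i,j} ≤ Y_{i,j} for all n ≥ i ≥ j ≥ 1. -/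
/-!
In a Gog triangle `Y`, entries weakly increase along diagonals and strictly increase along
rows, so `Y (i - t) k + (j - k - t) ≤ Y i j` for `t ≤ j - k`: the completion `X̂ i j` is the
largest of these lower bounds, hence below every Gog extension of `X`. Conversely, each
inequality defining a Gog triangle compares two such maxima term by term after the shift
`t ↦ t ± 1`; the only term without a partner is handled by the inequality
`X (i + 1) k ≤ X i k` of the trapezoid, and the top row is pinned down by comparing with one
Gog extension of `X`.
-/

theorem IsGT.le_diag {n : ℕ} {Y : ℕ → ℕ → ℤ} (h : IsGT n Y) {a b : ℕ} (hb : 1 ≤ b)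
    (hba : b ≤ a) : ∀ s, a + s ≤ n → Y a b ≤ Y (a + s) (b + s)
  | 0, _ => le_rfl
  | s + 1, han =>
    (h.le_diag hb hba s (by omega)).trans (h.2 (a + s) (b + s) (by omega) (by omega) (by omega)).2

theorem IsGog.add_sub_le {n : ℕ} {Y : ℕ → ℕ → ℤ} (h : IsGog n Y) {i b c : ℕ} (hb : 1 ≤ b)
    (hbc : b ≤ c) (hci : c ≤ i) (hin : i ≤ n) : Y i b + ((c - b : ℕ) : ℤ) ≤ Y i c := by
  induction c, hbc using Nat.le_induction with
  | base => simp
  | succ c hbc ih =>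
    have := h.2.1 i c (by omega) hci hin
    have := ih (by omega)
    omega

/-- The candidate `X̂ i j` for `j ≥ k`; at `j = k` it is `X i k`. -/
def minCompletion (X : ℕ → ℕ → ℤ) (k i j : ℕ) : ℤ :=
  (Finset.range (j - k + 1)).sup' Finset.nonempty_range_add_one
    (fun t => X (i - t) k + ((j - k - t : ℕ) : ℤ))

section minCompletion

variable {X : ℕ → ℕ → ℤ} {k i j : ℕ}

theorem le_minCompletion {t : ℕ} (ht : t ≤ j - k) :
    X (i - t) k + ((j - k - t : ℕ) : ℤ) ≤ minCompletion X k i j :=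
  Finset.le_sup' (fun t => X (i - t) k + ((j - k - t : ℕ) : ℤ))
    (Finset.mem_range_succ_iff.mpr ht)

theorem add_le_minCompletion : X i k + ((j - k : ℕ) : ℤ) ≤ minCompletion X k i j :=
  le_minCompletion (t := 0) (Nat.zero_le _)

theorem minCompletion_le_iff {c : ℤ} :
    minCompletion X k i j ≤ c ↔ ∀ t ≤ j - k, X (i - t) k + ((j - k - t : ℕ) : ℤ) ≤ c := by
  simp only [minCompletion, Finset.sup'_le_iff, Finset.mem_range_succ_iff]

theorem minCompletion_self : minCompletion X k i k = X i k := by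
  simp [minCompletion]

theorem minCompletion_congr {Y : ℕ → ℕ → ℤ} (h : ∀ t ≤ j - k, X (i - t) k = Y (i - t) k) :
    minCompletion X k i j = minCompletion Y k i j :=
  Finset.sup'_congr _ rfl fun t ht => by rw [h t (Finset.mem_range_succ_iff.mp ht)]

theorem minCompletion_succ_le (hcol : X (i + 1) k ≤ X i k) :
    minCompletion X k (i + 1) j ≤ minCompletion X k i j := by
  refine minCompletion_le_iff.mpr fun t ht => ?_
  rcases t with _ | t
  · exact (add_le_add_left hcol _).trans add_le_minCompletion
  · have := le_minCompletion (X := X) (i := i) (show t ≤ j - k by omega)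
    rw [show i + 1 - (t + 1) = i - t by omega]
    omega

theorem minCompletion_le_succ_succ (hkj : k ≤ j) :
    minCompletion X k i j ≤ minCompletion X k (i + 1) (j + 1) := by
  refine minCompletion_le_iff.mpr fun t ht => ?_
  have := le_minCompletion (X := X) (i := i + 1) (j := j + 1) (show t + 1 ≤ j + 1 - k by omega)
  rw [show i + 1 - (t + 1) = i - t by omega] at this
  omega

theorem minCompletion_lt_succ (hkj : k ≤ j) :
    minCompletion X k i j < minCompletion X k i (j + 1) := by
  refine Order.le_sub_one_iff.mp (minCompletion_le_iff.mpr fun t ht => ?_)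
  have := le_minCompletion (X := X) (i := i) (j := j + 1) (show t ≤ j + 1 - k by omega)
  omega

theorem minCompletion_le_of_isGog {n : ℕ} (hY : IsGog n X) (hk : 1 ≤ k) (hkj : k ≤ j)
    (hji : j ≤ i) (hin : i ≤ n) : minCompletion X k i j ≤ X i j := by
  refine minCompletion_le_iff.mpr fun t ht => ?_
  have hdiag := hY.1.le_diag hk (show k ≤ i - t by omega) t (by omega)
  have hrow := hY.add_sub_le (show 1 ≤ k + t by omega) (show k + t ≤ j by omega) hji hin
  rw [show i - t + t = i by omega, add_comm k t] at hdiag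
  rw [add_comm k t] at hrow
  omega

end minCompletion

theorem IsGog.of_eq_minCompletion {n k : ℕ} {Y Z : ℕ → ℕ → ℤ} (hY : IsGog n Y) (hk : 1 ≤ k)
    (hleft : ∀ i j, 1 ≤ j → j ≤ i → i ≤ n → j ≤ k → Z i j = Y i j)
    (hright : ∀ i j, 1 ≤ j → j ≤ i → i ≤ n → k ≤ j → Z i j = minCompletion Y k i j) :
    IsGog n Z := by
  refine ⟨⟨fun i j hj hji hin => ?_, fun i j hj hji hin => ⟨?_, ?_⟩⟩, fun i j hj hji hin => ?_,
    fun j hj hjn => ?_⟩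
  · rcases le_total j k with hjk | hkj
    · rw [hleft i j hj hji hin hjk]; exact hY.1.1 i j hj hji hin
    · rw [hright i j hj hji hin hkj]
      have := hY.1.1 i k hk (by omega) hin
      have := add_le_minCompletion (X := Y) (k := k) (i := i) (j := j)
      omega
  · rcases le_total j k with hjk | hkj
    · rw [hleft _ _ hj (by omega) hin hjk, hleft i j hj hji (by omega) hjk]
      exact (hY.1.2 i j hj hji hin).1
    · rw [hright _ _ hj (by omega) hin hkj, hright i j hj hji (by omega) hkj]
      exact minCompletion_succ_le (hY.1.2 i k hk (by omega) hin).1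
  · rcases lt_or_ge j k with hjk | hkj
    · rw [hleft _ _ (by omega) (by omega) hin hjk, hleft i j hj hji (by omega) hjk.le]
      exact (hY.1.2 i j hj hji hin).2
    · rw [hright _ _ (by omega) (by omega) hin (by omega), hright i j hj hji (by omega) hkj]
      exact minCompletion_le_succ_succ hkj
  · rcases lt_or_ge j k with hjk | hkj
    · rw [hleft i _ (by omega) hji hin hjk, hleft i j hj (by omega) hin hjk.le]
      exact hY.2.1 i j hj hji hin
    · rw [hright i _ (by omega) hji hin (by omega), hright i j hj (by omega) hin hkj]
      exact minCompletion_lt_succ hkj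
  · rcases le_total j k with hjk | hkj
    · rw [hleft n j hj hjn le_rfl hjk]; exact hY.2.2 j hj hjn
    · rw [hright n j hj hjn le_rfl hkj]
      have hupper := minCompletion_le_of_isGog hY hk hkj hjn le_rfl
      have hlower := add_le_minCompletion (X := Y) (k := k) (i := n) (j := j)
      rw [hY.2.2 j hj hjn] at hupper
      rw [hY.2.2 k hk (by omega)] at hlower
      omega

theorem stmt1_general (n k : ℕ) (hk1 : 1 ≤ k) (X : ℕ → ℕ → ℤ)
    (hX : ∃ Y : ℕ → ℕ → ℤ, IsGog n Y ∧
      ∀ i j, 1 ≤ j → j ≤ i → i ≤ n → j ≤ k → X i j = Y i j)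
    (Xhat : ℕ → ℕ → ℤ)
    (hXhat1 : ∀ i j, 1 ≤ j → j ≤ i → i ≤ n → j ≤ k → Xhat i j = X i j)
    (hXhat2 : ∀ i j, 1 ≤ j → j ≤ i → i ≤ n → k < j →
      Xhat i j = Finset.sup' (Finset.range (j - k + 1)) Finset.nonempty_range_add_one
        (fun t => X (i - t) k + ((j - k - t : ℕ) : ℤ))) :
    IsGog n Xhat ∧
    ∀ Y : ℕ → ℕ → ℤ, IsGog n Y →
      (∀ i j, 1 ≤ j → j ≤ i → i ≤ n → j ≤ k → Y i j = X i j) →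
      ∀ i j, 1 ≤ j → j ≤ i → i ≤ n → Xhat i j ≤ Y i j := by
  have hhat : ∀ Y : ℕ → ℕ → ℤ, (∀ i j, 1 ≤ j → j ≤ i → i ≤ n → j ≤ k → X i j = Y i j) →
      ∀ i j, 1 ≤ j → j ≤ i → i ≤ n → k ≤ j → Xhat i j = minCompletion Y k i j := by
    intro Y hXY i j hj hji hin hkj
    rcases hkj.eq_or_lt with rfl | hkj
    · rw [hXhat1 i _ hj hji hin le_rfl, minCompletion_self, hXY i _ hj hji hin le_rfl]
    · rw [hXhat2 i j hj hji hin hkj]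
      exact minCompletion_congr fun t ht => hXY _ _ hk1 (by omega) (by omega) le_rfl
  obtain ⟨Y₀, hY₀, hY₀X⟩ := hX
  refine ⟨hY₀.of_eq_minCompletion hk1 (fun i j hj hji hin hjk =>
    (hXhat1 i j hj hji hin hjk).trans (hY₀X i j hj hji hin hjk)) (hhat Y₀ hY₀X), ?_⟩
  intro Y hY hYX i j hj hji hin
  rcases le_total j k with hjk | hkj
  · rw [hXhat1 i j hj hji hin hjk, hYX i j hj hji hin hjk]
  · rw [hhat Y (fun i j hj hji hin hjk => (hYX i j hj hji hin hjk).symm) i j hj hji hin hkj]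
    exact minCompletion_le_of_isGog hY hk1 hkj hji hin

/-- Minimal completion of an `(n,k)` left Gog trapezoid: for `j > k` the entry is
`max_{0 ≤ t ≤ j-k} (X (i-t) k + (j-k-t))`; this gives the smallest Gog triangle of
size `n` extending the trapezoid. -/
theorem stmt1 (n k : ℕ) (hk1 : 1 ≤ k) (hkn : k ≤ n) (X : ℕ → ℕ → ℤ)
    (hX : ∃ Y : ℕ → ℕ → ℤ, IsGog n Y ∧
      ∀ i j, 1 ≤ j → j ≤ i → i ≤ n → j ≤ k → X i j = Y i j)
    (Xhat : ℕ → ℕ → ℤ)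
    (hXhat1 : ∀ i j, 1 ≤ j → j ≤ i → i ≤ n → j ≤ k → Xhat i j = X i j)
    (hXhat2 : ∀ i j, 1 ≤ j → j ≤ i → i ≤ n → k < j →
      Xhat i j = Finset.sup' (Finset.range (j - k + 1)) Finset.nonempty_range_add_one
        (fun t => X (i - t) k + ((j - k - t : ℕ) : ℤ))) :
    IsGog n Xhat ∧
    ∀ Y : ℕ → ℕ → ℤ, IsGog n Y →
      (∀ i j, 1 ≤ j → j ≤ i → i ≤ n → j ≤ k → Y i j = X i j) →
      ∀ i j, 1 ≤ j → j ≤ i → i ≤ n → Xhat i j ≤ Y i j :=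
  stmt1_general n k hk1 X hX Xhat hXhat1 hXhat2
end

section
/- Let X be a GOGAm triangle of size n and let k ≥ 1. Define the array Y by Y_{i,j} = 1 for all indices with n ≥ i ≥ j+k, and Y_{i,j} = X_{i,j} otherwise. Then Y is a GOGAm triangle of size n. -/
/-!
The inequality indexed by a path `j` is a sum of differences of two entries lying on the same
diagonal `i - j = const`, plus one final entry. Entries on a common diagonal of a Gelfand-Tsetlin
triangle increase towards the top row, so every difference is nonnegative; and the replacement by
`1` acts diagonal by diagonal. Hence each summand of the new triangle is bounded by the
corresponding summand of the old one: it is unchanged, or a difference `1 - 1 = 0`, or the final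
entry replaced by `1`.
-/

def fillOnes (k : ℕ) (X : ℕ → ℕ → ℤ) : ℕ → ℕ → ℤ :=
  fun i j => if j + k ≤ i then 1 else X i j

def pathSum (X : ℕ → ℕ → ℤ) (j : ℕ → ℕ) (m : ℕ) : ℤ :=
  (∑ i ∈ Finset.range m, (X (j i + i) (j i) - X (j (i+1) + i) (j (i+1)))) + X (j m + m) (j m)

lemma fillOnes_add_left (k : ℕ) (X : ℕ → ℕ → ℤ) (c i : ℕ) :
    fillOnes k X (c + i) c = if k ≤ i then 1 else X (c + i) c := by
  simp [fillOnes]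

namespace IsGT

variable {n : ℕ} {X : ℕ → ℕ → ℤ}

lemma le_add_add (hX : IsGT n X) {r c : ℕ} (hc : 1 ≤ c) (hcr : c ≤ r) :
    ∀ {d : ℕ}, r + d ≤ n → X r c ≤ X (r + d) (c + d)
  | 0, _ => le_rfl
  | d + 1, hd => (hX.le_add_add hc hcr (by omega)).trans (hX.2 (r + d) (c + d) (by omega)
      (by omega) (by omega)).2

lemma fillOnes (hX : IsGT n X) (k : ℕ) : IsGT n (fillOnes k X) := by
  refine ⟨fun i j hj hji hi => ?_, fun i j hj hji hi => ⟨?_, ?_⟩⟩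
  · unfold _root_.fillOnes
    split_ifs
    exacts [le_rfl, hX.1 i j hj hji hi]
  · unfold _root_.fillOnes
    split_ifs
    exacts [le_rfl, hX.1 i j hj hji (by omega), by omega, (hX.2 i j hj hji hi).1]
  · have hdiag : j + 1 + k ≤ i + 1 ↔ j + k ≤ i := by omega
    unfold _root_.fillOnes
    simp only [hdiag]
    split_ifs
    exacts [le_rfl, (hX.2 i j hj hji hi).2]

end IsGT

lemma apply_add_le_apply_add_of_forall_lt {j : ℕ → ℕ} {m : ℕ} (hj : ∀ i < m, j (i+1) < j i)
    {i : ℕ} :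
    ∀ {i' : ℕ}, i ≤ i' → i' ≤ m → j i' + i' ≤ j i + i
  | 0, hi, _ => by rw [Nat.le_zero.mp hi]
  | i' + 1, hi, hi' => by
    rcases hi.eq_or_lt with rfl | hlt
    · exact le_rfl
    · have hprev := apply_add_le_apply_add_of_forall_lt hj (Nat.le_of_lt_succ hlt) (by omega)
      have hstep := hj i' (by omega)
      omega

lemma pathSum_fillOnes_le {n m : ℕ} {X : ℕ → ℕ → ℤ} (hX : IsGT n X) (k : ℕ) {j : ℕ → ℕ}
    (hj0 : j 0 = n) (hj : ∀ i < m, j (i+1) < j i) (hjm : 1 ≤ j m) :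
    pathSum (fillOnes k X) j m ≤ pathSum X j m := by
  have hpath : ∀ i ≤ m, 1 ≤ j i ∧ j i + i ≤ n := fun i hi => by
    have hfirst := apply_add_le_apply_add_of_forall_lt hj (Nat.zero_le i) hi
    have hlast := apply_add_le_apply_add_of_forall_lt hj hi le_rfl
    omega
  unfold pathSum
  refine add_le_add (Finset.sum_le_sum fun i hi => ?_) ?_
  · have him : i < m := Finset.mem_range.mp hi
    obtain ⟨hpos, -⟩ := hpath (i + 1) him
    obtain ⟨-, hbound⟩ := hpath i him.le
    have hlt := hj i him
    have hdiag := hX.le_add_add (r := j (i+1) + i) (d := j i - j (i+1)) hpos (by omega)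
      (by omega)
    rw [show j (i+1) + i + (j i - j (i+1)) = j i + i by omega,
      show j (i+1) + (j i - j (i+1)) = j i by omega] at hdiag
    rw [fillOnes_add_left, fillOnes_add_left]
    by_cases hki : k ≤ i <;> simp [hki, hdiag]
  · obtain ⟨hpos, hbound⟩ := hpath m le_rfl
    rw [fillOnes_add_left]
    split_ifs
    exacts [hX.1 _ _ hpos (by omega) hbound, le_rfl]

/-- Replacing the entries of a GOGAm triangle on the upper-left triangle
`n ≥ i ≥ j + k` by `1` yields again a GOGAm triangle. -/
theorem stmt2 (n k : ℕ) (hk : 1 ≤ k) (X : ℕ → ℕ → ℤ) (hX : IsGogam n X) :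
    IsGogam n (fun i j => if j + k ≤ i then 1 else X i j) := by
  obtain ⟨hGT, htop, hineq⟩ := hX
  refine ⟨hGT.fillOnes k, ?_, fun k' hk'1 hk'2 j hj0 hj hjm => ?_⟩
  · simpa [show ¬n + k ≤ n by omega] using htop
  · exact (pathSum_fillOnes_le hGT k hj0 hj hjm).trans (hineq k' hk'1 hk'2 j hj0 hj hjm)
end

section
/- Let n ≥ m ≥ k ≥ 1 and let X be a GOGAm triangle of size n which is constant on each partial SW-NE diagonal starting at column k in row i for every i ≥ m+1, i.e. X_{i+t,k+t} = X_{i,k} for all i ≥ m+1 and 0 ≤ t ≤ n−i. Define the array Y by Y_{m+t,k+t} = X_{m,k} for 1 ≤ t ≤ n−m, and Y_{i,j} = X_{i,j} for all other indices. Then Y is a GOGAm triangle of size n. -/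
/-!
Overwriting the diagonal `X (m+t) (k+t)` by `X m k` only lowers entries, because Gelfand-Tsetlin
triangles increase along SW-NE diagonals. The new diagonal still fits between its neighbours: above
it sits the old diagonal through `(m, k)`, below it the diagonal through `(m+1, k)`, which is
constant and hence bounded by `X (m+1) k ≤ X m k`. Each term of a GOGAm inequality is a difference
of two entries on one SW-NE diagonal; if the subtracted entry was overwritten then so was the other
one, and the term drops to `0`, otherwise it can only decrease.
-/

theorem IsGT.le_add_add_s3 {n : ℕ} {X : ℕ → ℕ → ℤ} (hX : IsGT n X) {a b : ℕ} (hb : 1 ≤ b)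
    (hba : b ≤ a) : ∀ {d : ℕ}, a + d ≤ n → X a b ≤ X (a + d) (b + d)
  | 0, _ => le_rfl
  | d + 1, h => (hX.le_add_add_s3 hb hba (by omega)).trans
      (hX.2 (a + d) (b + d) (by omega) (by omega) (by omega)).2

theorem add_le_of_strictAnti_chain {n N : ℕ} {j : ℕ → ℕ} (h0 : j 0 = n)
    (hdec : ∀ i, i < N → j (i + 1) < j i) : ∀ i, i ≤ N → j i + i ≤ n
  | 0, _ => by omega
  | i + 1, h => by
    have := add_le_of_strictAnti_chain h0 hdec i (by omega)
    have := hdec i (by omega)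
    omega

theorem IsGogam.of_le {n : ℕ} {X Y : ℕ → ℕ → ℤ} (hX : IsGogam n X) (hY : IsGT n Y)
    (hle : ∀ a b, a ≤ n → Y a b ≤ X a b)
    (hdiff : ∀ d b c, b < c → c + d ≤ n →
      Y (c + d) c - Y (b + d) b ≤ X (c + d) c - X (b + d) b) :
    IsGogam n Y := by
  obtain ⟨-, hnn, hsum⟩ := hX
  refine ⟨hY, (hle n n le_rfl).trans hnn, fun K hK1 hK2 j hj0 hdec hlast => ?_⟩
  have hj := add_le_of_strictAnti_chain hj0 hdec
  refine le_trans ?_ (hsum K hK1 hK2 j hj0 hdec hlast)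
  refine add_le_add (Finset.sum_le_sum fun i hi => ?_) (hle _ _ (hj _ le_rfl))
  have hi := Finset.mem_range.mp hi
  exact hdiff i _ _ (hdec i hi) (hj i hi.le)

def diagFill (m k : ℕ) (X : ℕ → ℕ → ℤ) : ℕ → ℕ → ℤ :=
  fun i j => if m < i ∧ k < j ∧ i - m = j - k then X m k else X i j

section diagFill

variable {n m k : ℕ} {X : ℕ → ℕ → ℤ}

theorem diagFill_of_onDiag {i j : ℕ} (h : m < i ∧ k < j ∧ i - m = j - k) :
    diagFill m k X i j = X m k := if_pos h

theorem diagFill_of_not_onDiag {i j : ℕ} (h : ¬(m < i ∧ k < j ∧ i - m = j - k)) :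
    diagFill m k X i j = X i j := if_neg h

theorem diagFill_le (hX : IsGT n X) (hk : 1 ≤ k) (hkm : k ≤ m) {a : ℕ} (b : ℕ) (ha : a ≤ n) :
    diagFill m k X a b ≤ X a b := by
  by_cases h : m < a ∧ k < b ∧ a - m = b - k
  · rw [diagFill_of_onDiag h]
    have := hX.le_add_add_s3 hk hkm (d := a - m) (by omega)
    rwa [show m + (a - m) = a by omega, show k + (a - m) = b by omega] at this
  · rw [diagFill_of_not_onDiag h]

theorem isGT_diagFill (hX : IsGT n X) (hk : 1 ≤ k) (hkm : k ≤ m)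
    (hbelow : ∀ t, m + 1 + t ≤ n → X (m + 1 + t) (k + t) ≤ X m k) :
    IsGT n (diagFill m k X) := by
  refine ⟨fun i j h1 h2 h3 => ?_, fun i j h1 h2 h3 => ⟨?_, ?_⟩⟩
  · by_cases h : m < i ∧ k < j ∧ i - m = j - k
    · rw [diagFill_of_onDiag h]
      exact hX.1 m k hk hkm (by omega)
    · rw [diagFill_of_not_onDiag h]
      exact hX.1 i j h1 h2 h3
  · by_cases h : m < i ∧ k < j ∧ i - m = j - k
    · rw [diagFill_of_onDiag h, diagFill_of_not_onDiag (by omega)]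
      have := hbelow (j - k) (by omega)
      rwa [show m + 1 + (j - k) = i + 1 by omega, show k + (j - k) = j by omega] at this
    · rw [diagFill_of_not_onDiag h]
      exact (diagFill_le hX hk hkm j h3).trans (hX.2 i j h1 h2 h3).1
  · by_cases h : m < i ∧ k < j ∧ i - m = j - k
    · rw [diagFill_of_onDiag h, diagFill_of_onDiag (by omega)]
    · rw [diagFill_of_not_onDiag h]
      by_cases h' : m < i + 1 ∧ k < j + 1 ∧ i + 1 - m = j + 1 - k
      · obtain ⟨rfl, rfl⟩ : i = m ∧ j = k := by omega
        rw [diagFill_of_onDiag h']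
      · rw [diagFill_of_not_onDiag h']
        exact (hX.2 i j h1 h2 h3).2

theorem diagFill_sub_le (hX : IsGT n X) (hk : 1 ≤ k) (hkm : k ≤ m) {d b c : ℕ} (hbc : b < c)
    (hc : c + d ≤ n) :
    diagFill m k X (c + d) c - diagFill m k X (b + d) b ≤ X (c + d) c - X (b + d) b := by
  by_cases h : m < b + d ∧ k < b ∧ b + d - m = b - k
  · rw [diagFill_of_onDiag h, diagFill_of_onDiag (by omega), sub_self, sub_nonneg]
    have := hX.le_add_add_s3 (a := b + d) (b := b) (d := c - b) (by omega) (by omega) (by omega)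
    rwa [show b + d + (c - b) = c + d by omega, show b + (c - b) = c by omega] at this
  · rw [diagFill_of_not_onDiag h]
    exact sub_le_sub_right (diagFill_le hX hk hkm c (by omega)) _

end diagFill

theorem stmt3_general (n m k : ℕ) (hk : 1 ≤ k) (hkm : k ≤ m)
    (X : ℕ → ℕ → ℤ) (hX : IsGogam n X)
    (hconst : ∀ i, m + 1 ≤ i → i ≤ n → ∀ t, t ≤ n - i → X (i + t) (k + t) = X i k) :
    IsGogam n (fun i j => if m < i ∧ k < j ∧ i - m = j - k then X m k else X i j) := by
  have hGT := hX.1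
  have hbelow : ∀ t, m + 1 + t ≤ n → X (m + 1 + t) (k + t) ≤ X m k := fun t ht =>
    (hconst (m + 1) le_rfl (by omega) t (by omega)).trans_le (hGT.2 m k hk hkm (by omega)).1
  exact hX.of_le (isGT_diagFill hGT hk hkm hbelow) (fun _ b => diagFill_le hGT hk hkm b)
    fun _ _ _ hbc hc => diagFill_sub_le hGT hk hkm hbc hc

/-- If a GOGAm triangle is constant on each partial SW-NE diagonal starting at column `k`
in row `i` for every `i ≥ m+1`, then replacing the entries `X (m+t) (k+t)` (for
`1 ≤ t ≤ n-m`) by `X m k` yields again a GOGAm triangle. -/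
theorem stmt3 (n m k : ℕ) (hk : 1 ≤ k) (hkm : k ≤ m) (hmn : m ≤ n)
    (X : ℕ → ℕ → ℤ) (hX : IsGogam n X)
    (hconst : ∀ i, m + 1 ≤ i → i ≤ n → ∀ t, t ≤ n - i → X (i + t) (k + t) = X i k) :
    IsGogam n (fun i j => if m < i ∧ k < j ∧ i - m = j - k then X m k else X i j) :=
  stmt3_general n m k hk hkm X hX hconst
end

section
/- Let n ≥ k ≥ 1 and let X be an (n,k) left GOGAm trapezoid. Define the array X̂ of size n by X̂_{i,j} = X_{i,j} for j ≤ k and X̂_{i,j} = X_{i−j+k,k} for n ≥ i ≥ j ≥ k (so the added entries are constant along SW-NE diagonals). Then X̂ is a GOGAm triangle of size n, and it is the minimal GOGAm triangle extending X: for every GOGAm triangle Y of size n whose restriction to the indices with j ≤ k equals X, one has X̂_{i,j} ≤ Y_{i,j} for all n ≥ i ≥ j ≥ 1. -/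
/-!
Along each SW–NE diagonal `c ↦ Y (c + d) c` a Gelfand–Tsetlin triangle is weakly increasing,
and completing from column `k` replaces this function by `c ↦ Y (min c k + d) (min c k)`.
Each summand of a GOGAm inequality is a difference of two entries on one diagonal, and
truncating an increasing function at `k` can only shrink such differences, so the completion
of a GOGAm triangle is again GOGAm. The same monotonicity puts the completion below every
GOGAm triangle extending the trapezoid.
-/

theorem MonotoneOn.sub_min_le_sub {α β : Type*} [LinearOrder α] [AddCommGroup β] [PartialOrder β]
    [IsOrderedAddMonoid β] {f : α → β} {lo hi k a b : α} (hf : MonotoneOn f (Set.Icc lo hi))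
    (hk : lo ≤ k) (hb : lo ≤ b) (hba : b ≤ a) (ha : a ≤ hi) :
    f (min a k) - f (min b k) ≤ f a - f b := by
  rcases le_total a k with hak | hka
  · rw [min_eq_left hak, min_eq_left (hba.trans hak)]
  rcases le_total b k with hbk | hkb
  · rw [min_eq_right hka, min_eq_left hbk]
    exact sub_le_sub_right (hf ⟨hk, hka.trans ha⟩ ⟨hb.trans hba, ha⟩ hka) _
  · rw [min_eq_right hka, min_eq_right hkb, sub_self, sub_nonneg]
    exact hf ⟨hb, hba.trans ha⟩ ⟨hb.trans hba, ha⟩ hba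

theorem bounds_of_decreasing {n N : ℕ} {j : ℕ → ℕ} (hj0 : j 0 = n)
    (hdec : ∀ i < N, j (i + 1) < j i) (hN : 1 ≤ j N) {i : ℕ} (hi : i ≤ N) :
    1 ≤ j i ∧ j i + i ≤ n := by
  refine ⟨hN.trans ((strictAntiOn_Iic_of_succ_lt hdec).antitoneOn hi Set.self_mem_Iic hi), ?_⟩
  induction i with
  | zero => omega
  | succ i ih => have := hdec i hi; have := ih (by omega); omega

/-- The array `X̂` built from the columns `j ≤ k` of `X`. -/
def completion (k : ℕ) (X : ℕ → ℕ → ℤ) : ℕ → ℕ → ℤ :=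
  fun i j => if j ≤ k then X i j else X (i - j + k) k

theorem completion_add_apply (k : ℕ) (X : ℕ → ℕ → ℤ) (c d : ℕ) :
    completion k X (c + d) c = X (min c k + d) (min c k) := by
  unfold completion
  split_ifs with h
  · rw [min_eq_left h]
  · rw [min_eq_right (by omega), show c + d - c + k = k + d by omega]

theorem completion_congr {n k : ℕ} {X Y : ℕ → ℕ → ℤ} (hk : 1 ≤ k)
    (h : ∀ i j, 1 ≤ j → j ≤ i → i ≤ n → j ≤ k → X i j = Y i j)
    {i j : ℕ} (h1 : 1 ≤ j) (h2 : j ≤ i) (h3 : i ≤ n) :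
    completion k X i j = completion k Y i j := by
  obtain ⟨d, rfl⟩ := Nat.exists_eq_add_of_le h2
  rw [completion_add_apply, completion_add_apply]
  exact h _ _ (by omega) (by omega) (by omega) (min_le_right _ _)

namespace IsGT

variable {n : ℕ} {X Y : ℕ → ℕ → ℤ}

theorem congr (h : ∀ i j, 1 ≤ j → j ≤ i → i ≤ n → X i j = Y i j) (hX : IsGT n X) :
    IsGT n Y := by
  refine ⟨fun i j h1 h2 h3 => h i j h1 h2 h3 ▸ hX.1 i j h1 h2 h3, fun i j h1 h2 h3 => ?_⟩
  rw [← h i j h1 h2 (by omega), ← h (i + 1) j h1 (by omega) h3,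
    ← h (i + 1) (j + 1) (by omega) (by omega) h3]
  exact hX.2 i j h1 h2 h3

theorem diag_monotoneOn (hY : IsGT n Y) (d : ℕ) :
    MonotoneOn (fun c => Y (c + d) c) (Set.Icc 1 (n - d)) :=
  monotoneOn_of_le_add_one Set.ordConnected_Icc fun c _ hc hc1 => by
    have := (hY.2 (c + d) c hc.1 (by omega) (by grind)).2
    rwa [add_right_comm] at this

theorem completion_le (hY : IsGT n Y) {k : ℕ} (hk : 1 ≤ k) {i j : ℕ} (h1 : 1 ≤ j) (h2 : j ≤ i)
    (h3 : i ≤ n) : completion k Y i j ≤ Y i j := by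
  obtain ⟨d, rfl⟩ := Nat.exists_eq_add_of_le h2
  rw [completion_add_apply]
  exact hY.diag_monotoneOn d ⟨by omega, by omega⟩ ⟨h1, by omega⟩ (min_le_left _ _)

theorem completion (hY : IsGT n Y) {k : ℕ} (hk : 1 ≤ k) : IsGT n (completion k Y) := by
  refine ⟨fun i j h1 h2 h3 => ?_, fun i j h1 h2 h3 => ?_⟩
  · obtain ⟨d, rfl⟩ := Nat.exists_eq_add_of_le h2
    rw [completion_add_apply]
    exact hY.1 _ _ (by omega) (by omega) (by omega)
  · obtain ⟨d, rfl⟩ := Nat.exists_eq_add_of_le h2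
    rw [show j + d + 1 = j + (d + 1) by omega, completion_add_apply, completion_add_apply,
      show j + (d + 1) = (j + 1) + d by omega, completion_add_apply]
    exact ⟨(hY.2 (min j k + d) (min j k) (by omega) (by omega) (by omega)).1,
      hY.diag_monotoneOn d ⟨by omega, by omega⟩ ⟨by omega, by omega⟩ (by omega)⟩

end IsGT

namespace IsGogam

variable {n : ℕ} {X Y : ℕ → ℕ → ℤ}

theorem congr (hn : 1 ≤ n) (h : ∀ i j, 1 ≤ j → j ≤ i → i ≤ n → X i j = Y i j)
    (hX : IsGogam n X) : IsGogam n Y := by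
  refine ⟨hX.1.congr h, h n n hn le_rfl le_rfl ▸ hX.2.1, ?_⟩
  intro m hm1 hm2 j hj0 hdec hjN
  convert hX.2.2 m hm1 hm2 j hj0 hdec hjN using 1
  refine congr_arg₂ (· + ·) (Finset.sum_congr rfl fun i hi => ?_) ?_
  · rw [Finset.mem_range] at hi
    have hji := bounds_of_decreasing hj0 hdec hjN hi.le
    have hji' := bounds_of_decreasing (i := i + 1) hj0 hdec hjN hi
    rw [h (j i + i) (j i) hji.1 (by omega) hji.2,
      h (j (i + 1) + i) (j (i + 1)) hji'.1 (by omega) (by omega)]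
  · have hjm := bounds_of_decreasing hj0 hdec hjN le_rfl
    rw [h (j (n - m) + (n - m)) (j (n - m)) hjm.1 (by omega) hjm.2]

theorem completion (hY : IsGogam n Y) {k : ℕ} (hk : 1 ≤ k) : IsGogam n (completion k Y) := by
  refine ⟨hY.1.completion hk, ?_, ?_⟩
  · obtain rfl | hn := n.eq_zero_or_pos
    · simpa [_root_.completion] using hY.2.1
    · exact (hY.1.completion_le hk hn le_rfl le_rfl).trans hY.2.1
  intro m hm1 hm2 j hj0 hdec hjN
  simp only [completion_add_apply]
  refine le_trans (add_le_add (Finset.sum_le_sum fun i hi => ?_) ?_)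
    (hY.2.2 m hm1 hm2 j hj0 hdec hjN)
  · rw [Finset.mem_range] at hi
    have hji := bounds_of_decreasing hj0 hdec hjN hi.le
    have hji' := bounds_of_decreasing (i := i + 1) hj0 hdec hjN hi
    exact (hY.1.diag_monotoneOn i).sub_min_le_sub hk hji'.1 (hdec i hi).le (by omega)
  · have hjm := bounds_of_decreasing hj0 hdec hjN le_rfl
    exact hY.1.diag_monotoneOn (n - m) ⟨by omega, by omega⟩ ⟨hjm.1, by omega⟩ (min_le_left _ _)

end IsGogam

/-- Minimal completion of an `(n,k)` left GOGAm trapezoid: the added entries are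
constant on SW-NE diagonals, `X̂ i j = X (i-j+k) k` for `j ≥ k`; this gives the
smallest GOGAm triangle of size `n` extending the trapezoid. -/
theorem stmt5 (n k : ℕ) (hk1 : 1 ≤ k) (hkn : k ≤ n) (X : ℕ → ℕ → ℤ)
    (hX : ∃ Y : ℕ → ℕ → ℤ, IsGogam n Y ∧
      ∀ i j, 1 ≤ j → j ≤ i → i ≤ n → j ≤ k → X i j = Y i j) :
    IsGogam n (fun i j => if j ≤ k then X i j else X (i - j + k) k) ∧
    ∀ Y : ℕ → ℕ → ℤ, IsGogam n Y →
      (∀ i j, 1 ≤ j → j ≤ i → i ≤ n → j ≤ k → Y i j = X i j) →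
      ∀ i j, 1 ≤ j → j ≤ i → i ≤ n →
        (if j ≤ k then X i j else X (i - j + k) k) ≤ Y i j := by
  obtain ⟨Y, hY, hXY⟩ := hX
  refine ⟨(hY.completion hk1).congr (hk1.trans hkn) fun i j h1 h2 h3 =>
    (completion_congr hk1 hXY h1 h2 h3).symm, ?_⟩
  intro Y' hY' hY'X i j h1 h2 h3
  calc completion k X i j = completion k Y' i j :=
        (completion_congr hk1 hY'X h1 h2 h3).symm
    _ ≤ Y' i j := hY'.1.completion_le hk1 h1 h2 h3
end

section
/- For every n ≥ 1, the set of (n,1) left Gog trapezoids and the set of (n,1) left GOGAm trapezoids both coincide with the set of sequences of positive integers (X_{n,1}, X_{n−1,1}, …, X_{1,1}) satisfying X_{i+1,1} ≤ X_{i,1} for 1 ≤ i ≤ n−1 and X_{j,1} ≤ n−j+1 for 1 ≤ j ≤ n; in particular the identity map is a bijection between (n,1) left Gog trapezoids and (n,1) left GOGAm trapezoids, and the number of such trapezoids is the Catalan number C_n. -/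
/-- Index set of an `(n,k)` left trapezoid: `n ≥ i ≥ j ≥ 1` with `j ≤ k`. -/
def LeftIdx (n k : ℕ) (i j : ℕ) : Prop := 1 ≤ j ∧ j ≤ i ∧ i ≤ n ∧ j ≤ k

/-- `(n,k)` left Gog trapezoids, normalized to vanish outside the trapezoid. -/
def LeftGogTrapezoids (n k : ℕ) : Set (ℕ → ℕ → ℤ) :=
  {X | (∃ Y, IsGog n Y ∧ ∀ i j, LeftIdx n k i j → X i j = Y i j) ∧
    ∀ i j, ¬ LeftIdx n k i j → X i j = 0}

/-- `(n,k)` left GOGAm trapezoids, normalized to vanish outside the trapezoid. -/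
def LeftGogamTrapezoids (n k : ℕ) : Set (ℕ → ℕ → ℤ) :=
  {X | (∃ Y, IsGogam n Y ∧ ∀ i j, LeftIdx n k i j → X i j = Y i j) ∧
    ∀ i j, ¬ LeftIdx n k i j → X i j = 0}

/-- The nondecreasing (from top to bottom) sequences of positive integers
`X n 1, ..., X 1 1` with `X j 1 ≤ n - j + 1`, normalized to vanish off the
single-column domain. -/
def ColumnSeqs (n : ℕ) : Set (ℕ → ℕ → ℤ) :=
  {X | (∀ i, 1 ≤ i → i ≤ n → 1 ≤ X i 1) ∧
    (∀ i, 1 ≤ i → i + 1 ≤ n → X (i+1) 1 ≤ X i 1) ∧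
    (∀ j, 1 ≤ j → j ≤ n → X j 1 ≤ (n : ℤ) - j + 1) ∧
    ∀ i j, ¬ LeftIdx n 1 i j → X i j = 0}

def leftTrapezoids (P : (ℕ → ℕ → ℤ) → Prop) (n k : ℕ) : Set (ℕ → ℕ → ℤ) :=
  {X | (∃ Y, P Y ∧ ∀ i j, LeftIdx n k i j → X i j = Y i j) ∧
    ∀ i j, ¬ LeftIdx n k i j → X i j = 0}

lemma IsGT.le_diag_s7 {n : ℕ} {X : ℕ → ℕ → ℤ} (hX : IsGT n X) {i j i' j' : ℕ} (hj : 1 ≤ j)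
    (hji : j ≤ i) (hii' : i ≤ i') (hi' : i' ≤ n) (hdiag : i' + j = i + j') : X i j ≤ X i' j' := by
  obtain ⟨d, rfl⟩ := Nat.exists_eq_add_of_le hii'
  obtain rfl : j' = j + d := by omega
  induction d with
  | zero => rfl
  | succ d ih =>
    exact (ih (by omega) (by omega) (by omega)).trans
      (hX.2 (i + d) (j + d) (by omega) (by omega) (by omega)).2

lemma leftTrapezoids_one_eq_columnSeqs {P : (ℕ → ℕ → ℤ) → Prop} {n : ℕ}
    (hGT : ∀ Y, P Y → IsGT n Y) (hle : ∀ Y, P Y → ∀ i, 1 ≤ i → i ≤ n → Y i 1 ≤ (n : ℤ) - i + 1)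
    (hext : ∀ X ∈ ColumnSeqs n, ∃ Y, P Y ∧ ∀ i, 1 ≤ i → i ≤ n → Y i 1 = X i 1) :
    leftTrapezoids P n 1 = ColumnSeqs n := by
  ext X
  constructor
  · rintro ⟨⟨Y, hY, hXY⟩, hzero⟩
    have hcol : ∀ i, 1 ≤ i → i ≤ n → X i 1 = Y i 1 := fun i h1 h2 =>
      hXY i 1 ⟨le_rfl, h1, h2, le_rfl⟩
    refine ⟨fun i h1 h2 => ?_, fun i h1 h2 => ?_, fun i h1 h2 => ?_, hzero⟩
    · rw [hcol i h1 h2]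
      exact (hGT Y hY).1 i 1 le_rfl h1 h2
    · rw [hcol i h1 (by omega), hcol (i + 1) (by omega) h2]
      exact ((hGT Y hY).2 i 1 le_rfl h1 h2).1
    · rw [hcol i h1 h2]
      exact hle Y hY i h1 h2
  · intro hX
    obtain ⟨Y, hY, hYX⟩ := hext X hX
    refine ⟨⟨Y, hY, ?_⟩, hX.2.2.2⟩
    rintro i j ⟨h1, h2, h3, h4⟩
    obtain rfl : j = 1 := by omega
    exact (hYX i h2 h3).symm

lemma IsGog.apply_one_le {n : ℕ} {Y : ℕ → ℕ → ℤ} (hY : IsGog n Y) {i : ℕ} (h1 : 1 ≤ i)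
    (h2 : i ≤ n) : Y i 1 ≤ (n : ℤ) - i + 1 := by
  have := hY.1.le_diag_s7 (i' := n) (j' := n - i + 1) le_rfl h1 h2 le_rfl (by omega)
  rw [hY.2.2 (n - i + 1) (by omega) (by omega)] at this
  omega

def gogOfColumn (n : ℕ) (X : ℕ → ℕ → ℤ) : ℕ → ℕ → ℤ :=
  fun i j => min (X (i - j + 1) 1 + j - 1) ((n : ℤ) - i + j)

lemma isGog_gogOfColumn {n : ℕ} {X : ℕ → ℕ → ℤ} (hX : X ∈ ColumnSeqs n) :
    IsGog n (gogOfColumn n X) := by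
  obtain ⟨hpos, hmono, -, -⟩ := hX
  refine ⟨⟨fun i j h1 h2 h3 => ?_, fun i j h1 h2 h3 => ?_⟩, fun i j h1 h2 h3 => ?_,
    fun j h1 h2 => ?_⟩
  · have := hpos (i - j + 1) (by omega) (by omega)
    simp only [gogOfColumn]
    omega
  · have := hmono (i - j + 1) (by omega) (by omega)
    simp only [gogOfColumn, show i + 1 - j + 1 = i - j + 1 + 1 by omega,
      show i + 1 - (j + 1) + 1 = i - j + 1 by omega]
    omega
  · have := hmono (i - j) (by omega) (by omega)
    simp only [gogOfColumn, show i - (j + 1) + 1 = i - j by omega]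
    omega
  · have := hpos (n - j + 1) (by omega) (by omega)
    simp only [gogOfColumn]
    omega

lemma gogOfColumn_apply_one {n i : ℕ} {X : ℕ → ℕ → ℤ} (hX : X ∈ ColumnSeqs n) (h1 : 1 ≤ i)
    (h2 : i ≤ n) : gogOfColumn n X i 1 = X i 1 := by
  have := hX.2.2.1 i h1 h2
  simp only [gogOfColumn, show i - 1 + 1 = i by omega]
  omega

theorem leftGogTrapezoids_one (n : ℕ) : LeftGogTrapezoids n 1 = ColumnSeqs n :=
  leftTrapezoids_one_eq_columnSeqs (fun _ hY => hY.1) (fun _ hY _ => hY.apply_one_le)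
    fun X hX => ⟨gogOfColumn n X, isGog_gogOfColumn hX, fun _ => gogOfColumn_apply_one hX⟩

lemma IsGogam.apply_one_le {n : ℕ} {Y : ℕ → ℕ → ℤ} (hY : IsGogam n Y) {i : ℕ} (h1 : 1 ≤ i)
    (h2 : i ≤ n) : Y i 1 ≤ (n : ℤ) - i + 1 := by
  rcases eq_or_lt_of_le h1 with rfl | hi
  · have := hY.1.le_diag_s7 (i' := n) (j' := n) le_rfl le_rfl h2 le_rfl (by omega)
    have := hY.2.1
    omega
  obtain ⟨L, rfl⟩ : ∃ L, i = L + 1 := ⟨i - 1, by omega⟩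
  -- The GOGAm inequality for the path `n, n - 1, …, n - L + 1, 1`.
  set j : ℕ → ℕ := fun t => if t < L then n - t else 1 with hj
  have hLn : n - (n - L) = L := Nat.sub_sub_self (by omega)
  have hineq := hY.2.2 (n - L) (by omega) (by omega) j (by simp [hj, show 0 < L by omega])
    (fun t ht => by simp only [hj]; split_ifs <;> omega) (by simp [hj, hLn])
  rw [hLn] at hineq
  have hsum :
      0 ≤ ∑ t ∈ Finset.range L, (Y (j t + t) (j t) - Y (j (t + 1) + t) (j (t + 1))) := by
    refine Finset.sum_nonneg fun t ht => sub_nonneg.2 (hY.1.le_diag_s7 ?_ (by omega) ?_ ?_ ?_)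
      <;> simp only [Finset.mem_range] at ht <;> simp only [hj] <;> split_ifs <;> omega
  have hjL : j L = 1 := by simp [hj]
  rw [hjL, add_comm 1 L] at hineq
  push_cast [show L ≤ n by omega] at hineq
  omega

def gogamOfColumn (X : ℕ → ℕ → ℤ) : ℕ → ℕ → ℤ := fun i j => X (i - j + 1) 1

lemma gogamOfColumn_apply_add (X : ℕ → ℕ → ℤ) (i j : ℕ) :
    gogamOfColumn X (j + i) j = X (i + 1) 1 := by
  simp [gogamOfColumn]

lemma isGogam_gogamOfColumn {n : ℕ} {X : ℕ → ℕ → ℤ} (hX : X ∈ ColumnSeqs n) :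
    IsGogam n (gogamOfColumn X) := by
  obtain ⟨hpos, hmono, hle, hzero⟩ := hX
  refine ⟨⟨fun i j h1 h2 h3 => hpos _ (by omega) (by omega), fun i j h1 h2 h3 => ⟨?_, ?_⟩⟩,
    ?_, ?_⟩
  · simp only [gogamOfColumn, show i + 1 - j + 1 = i - j + 1 + 1 by omega]
    exact hmono _ (by omega) (by omega)
  · simp [gogamOfColumn, show i + 1 - (j + 1) = i - j by omega]
  · rcases Nat.eq_zero_or_pos n with rfl | hn
    · simp [gogamOfColumn, hzero 1 1 (by simp [LeftIdx])]
    · simpa [gogamOfColumn] using hle 1 le_rfl hn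
  · intro k hk1 hk2 j hj0 hdec hj1
    -- all summands vanish, since `gogamOfColumn X` is constant along diagonals
    simp only [gogamOfColumn_apply_add, sub_self, Finset.sum_const_zero, zero_add]
    have := hle (n - k + 1) (by omega) (by omega)
    push_cast [show k ≤ n by omega] at this
    omega

lemma gogamOfColumn_apply_one (X : ℕ → ℕ → ℤ) {i : ℕ} (h1 : 1 ≤ i) :
    gogamOfColumn X i 1 = X i 1 := by
  simp [gogamOfColumn, Nat.sub_add_cancel h1]

theorem leftGogamTrapezoids_one (n : ℕ) : LeftGogamTrapezoids n 1 = ColumnSeqs n :=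
  leftTrapezoids_one_eq_columnSeqs (fun _ hY => hY.1) (fun _ hY _ => hY.apply_one_le)
    fun X hX => ⟨gogamOfColumn X, isGogam_gogamOfColumn hX,
      fun _ h1 _ => gogamOfColumn_apply_one X h1⟩

def catalanSeqs (n : ℕ) : Set (List ℕ) :=
  {l | l.length = n ∧ l.Pairwise (· ≤ ·) ∧ ∀ i (hi : i < l.length), l[i] ≤ i}

def catalanGlue (p q : List ℕ) : List ℕ := 0 :: (p ++ q.map (· + (p.length + 1)))

lemma lt_length_of_mem_catalanSeqs {n : ℕ} {l : List ℕ} (hl : l ∈ catalanSeqs n) {x : ℕ}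
    (hx : x ∈ l) : x < l.length := by
  obtain ⟨i, hi, rfl⟩ := List.mem_iff_getElem.1 hx
  exact (hl.2.2 i hi).trans_lt hi

lemma catalanGlue_mem {p q : List ℕ} {k j : ℕ} (hp : p ∈ catalanSeqs k)
    (hq : q ∈ catalanSeqs j) : catalanGlue p q ∈ catalanSeqs (k + j + 1) := by
  obtain ⟨hpk, hp_sorted, hp_le⟩ := hp
  obtain ⟨hqj, hq_sorted, hq_le⟩ := hq
  refine ⟨by simp [catalanGlue, hpk, hqj], ?_, ?_⟩
  · simp only [catalanGlue, List.pairwise_cons, List.pairwise_append, List.pairwise_map,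
      List.mem_append, List.mem_map]
    refine ⟨by simp, hp_sorted, hq_sorted.imp (by omega), ?_⟩
    rintro x hx _ ⟨y, -, rfl⟩
    have := lt_length_of_mem_catalanSeqs ⟨hpk, hp_sorted, hp_le⟩ hx
    omega
  · rintro (_ | i) hi
    · simp [catalanGlue]
    · simp only [catalanGlue, List.getElem_cons_succ, List.getElem_append, List.getElem_map]
      split_ifs with h
      · exact (hp_le i h).trans i.le_succ
      · have := hq_le (i - p.length) (by simp [catalanGlue] at hi; omega)
        omega

lemma length_le_of_catalanGlue_eq {p q p' q' : List ℕ} {j k' : ℕ} (hq : q ∈ catalanSeqs j)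
    (hp' : p' ∈ catalanSeqs k') (h : catalanGlue p q = catalanGlue p' q') :
    p'.length ≤ p.length := by
  by_contra! hlt
  have hlen := congrArg List.length h
  simp only [catalanGlue, List.length_cons, List.length_append, List.length_map] at hlen
  have hq0 : 0 < q.length := by omega
  have key := congrArg (·[p.length + 1]?) h
  simp only [catalanGlue, List.getElem?_cons_succ, List.getElem?_append_right le_rfl,
    List.getElem?_append_left hlt, Nat.sub_self, List.getElem?_map,
    List.getElem?_eq_getElem hq0, List.getElem?_eq_getElem hlt, Option.map_some,
    Option.some.injEq] at key
  have := hq.2.2 0 hq0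
  have := hp'.2.2 _ hlt
  omega

lemma catalanGlue_inj {p q p' q' : List ℕ} {k j k' j' : ℕ} (hp : p ∈ catalanSeqs k)
    (hq : q ∈ catalanSeqs j) (hp' : p' ∈ catalanSeqs k') (hq' : q' ∈ catalanSeqs j')
    (h : catalanGlue p q = catalanGlue p' q') : p = p' ∧ q = q' := by
  have hlen : p.length = p'.length :=
    le_antisymm (length_le_of_catalanGlue_eq hq' hp h.symm) (length_le_of_catalanGlue_eq hq hp' h)
  simp only [catalanGlue, List.cons.injEq, true_and, hlen] at h
  obtain ⟨rfl, hmap⟩ := List.append_inj h hlen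
  exact ⟨rfl, List.map_injective_iff.2 (add_left_injective _) hmap⟩

lemma exists_catalanGlue_eq {n : ℕ} {l : List ℕ} (hl : l ∈ catalanSeqs (n + 1)) :
    ∃ p q, p.length ≤ n ∧ p ∈ catalanSeqs p.length ∧ q ∈ catalanSeqs (n - p.length) ∧
      catalanGlue p q = l := by
  classical
  obtain ⟨hlen, hl_sorted, hl_le⟩ := hl
  obtain ⟨a, r, rfl⟩ := List.exists_cons_of_length_eq_add_one hlen
  have ha : a = 0 := Nat.le_zero.1 (hl_le 0 (by simp))
  have hr_len : r.length = n := by simpa using hlen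
  have hr_sorted : r.Pairwise (· ≤ ·) := (List.pairwise_cons.1 hl_sorted).2
  have hr_le : ∀ i (hi : i < r.length), r[i] ≤ i + 1 := fun i hi => hl_le (i + 1) (by simpa)
  -- `k` is the first index with `r[k] = k + 1`, i.e. the first return of `a :: r` to the diagonal
  have hP : ∃ s, r.length ≤ s ∨ r.getD s 0 = s + 1 := ⟨r.length, .inl le_rfl⟩
  set k := Nat.find hP
  have hk_le : k ≤ r.length := Nat.find_min' hP (.inl le_rfl)
  have hr_lt : ∀ i (hi : i < k), r[i]'(by omega) < i + 1 := fun i hi => by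
    have := not_or.1 (Nat.find_min hP hi)
    rw [List.getD_eq_getElem _ _ (by omega)] at this
    exact lt_of_le_of_ne (hr_le i _) this.2
  have hr_ge : ∀ x ∈ r.drop k, k + 1 ≤ x := by
    intro x hx
    obtain ⟨i, hi, rfl⟩ := List.mem_iff_getElem.1 hx
    simp only [List.length_drop] at hi
    have hrk : r[k] = k + 1 := by
      have := (Nat.find_spec hP).resolve_left (by omega)
      rwa [List.getD_eq_getElem _ _ (by omega)] at this
    rw [List.getElem_drop, ← hrk]
    rcases Nat.eq_zero_or_pos i with rfl | hi0
    · exact le_rfl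
    · exact List.pairwise_iff_getElem.1 hr_sorted _ _ _ _ (by omega)
  refine ⟨r.take k, (r.drop k).map (· - (k + 1)), by simp; omega, ⟨by simp, ?_, ?_⟩,
    ⟨by simp; omega, ?_, ?_⟩, ?_⟩
  · exact hr_sorted.sublist (List.take_sublist _ _)
  · intro i hi
    simp only [List.getElem_take]
    have := hr_lt i (by simp at hi; omega)
    omega
  · exact List.pairwise_map.2 ((hr_sorted.sublist (List.drop_sublist _ _)).imp (by omega))
  · intro i hi
    simp only [List.getElem_map, List.getElem_drop]
    have := hr_le (k + i) (by simp at hi; omega)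
    omega
  · have hk' : (r.take k).length = k := by simp; omega
    simp only [catalanGlue, hk', List.map_map, ha]
    congr
    conv_rhs => rw [← List.take_append_drop k r]
    congr 1
    conv_rhs => rw [← List.map_id (r.drop k)]
    exact List.map_congr_left fun x hx => by have := hr_ge x hx; simp; omega

lemma catalan_ne_zero (n : ℕ) : catalan n ≠ 0 := fun h =>
  Nat.centralBinom_ne_zero n (by rw [← succ_mul_catalan_eq_centralBinom, h, mul_zero])

def catalanGlueSigma (n : ℕ) :
    (Σ k : Fin (n + 1), catalanSeqs k × catalanSeqs (n - k)) → catalanSeqs (n + 1) :=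
  fun ⟨k, p, q⟩ => ⟨catalanGlue p q, by
    simpa [show (k : ℕ) + (n - k) + 1 = n + 1 by omega] using catalanGlue_mem p.2 q.2⟩

lemma catalanGlueSigma_bijective (n : ℕ) : Function.Bijective (catalanGlueSigma n) := by
  constructor
  · rintro ⟨k, p, q⟩ ⟨k', p', q'⟩ h
    obtain ⟨hp, hq⟩ := catalanGlue_inj p.2 q.2 p'.2 q'.2 (congrArg Subtype.val h)
    obtain rfl : k = k' := Fin.ext (by rw [← p.2.1, ← p'.2.1, hp])
    obtain rfl := Subtype.ext hp
    obtain rfl := Subtype.ext hq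
    rfl
  · rintro ⟨l, hl⟩
    obtain ⟨p, q, hpn, hp, hq, rfl⟩ := exists_catalanGlue_eq hl
    exact ⟨⟨⟨p.length, by omega⟩, ⟨p, hp⟩, ⟨q, hq⟩⟩, rfl⟩

theorem card_catalanSeqs (n : ℕ) : Nat.card (catalanSeqs n) = catalan n := by
  induction n using Nat.strong_induction_on with
  | _ n ih =>
    rcases n with _ | n
    · have : catalanSeqs 0 = {[]} := by
        ext l
        simp only [catalanSeqs, List.length_eq_zero_iff, Set.mem_ofPred_eq, Set.mem_singleton_iff]
        exact ⟨fun h => h.1, by rintro rfl; simp⟩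
      simp [this]
    · have hfin (k : Fin (n + 1)) : Finite (catalanSeqs k × catalanSeqs (n - k)) :=
        Nat.finite_of_card_ne_zero (by
          rw [Nat.card_prod, ih k (by omega), ih (n - k) (by omega)]
          exact mul_ne_zero (catalan_ne_zero _) (catalan_ne_zero _))
      rw [← Nat.card_congr (Equiv.ofBijective _ (catalanGlueSigma_bijective n)), Nat.card_sigma,
        catalan_succ]
      refine Finset.sum_congr rfl fun k _ => ?_
      rw [Nat.card_prod, ih k (by omega), ih (n - k) (by omega)]

def columnOfList (n : ℕ) (l : List ℕ) : ℕ → ℕ → ℤ :=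
  fun i j => if j = 1 ∧ 1 ≤ i ∧ i ≤ n then (l.getD (n - i) 0 : ℤ) + 1 else 0

lemma columnOfList_apply_one {n i : ℕ} {l : List ℕ} (h1 : 1 ≤ i) (h2 : i ≤ n)
    (hl : n - i < l.length) : columnOfList n l i 1 = l[n - i] + 1 := by
  simp [columnOfList, h1, h2, List.getElem?_eq_getElem hl]

lemma columnOfList_mem {n : ℕ} {l : List ℕ} (hl : l ∈ catalanSeqs n) :
    columnOfList n l ∈ ColumnSeqs n := by
  obtain ⟨hlen, hl_sorted, hl_le⟩ := hl
  refine ⟨fun i h1 h2 => ?_, fun i h1 h2 => ?_, fun i h1 h2 => ?_, fun i j h => if_neg ?_⟩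
  · rw [columnOfList_apply_one h1 h2 (by omega)]
    omega
  · rw [columnOfList_apply_one h1 (by omega) (by omega),
      columnOfList_apply_one (by omega) h2 (by omega)]
    have := List.pairwise_iff_getElem.1 hl_sorted (n - (i + 1)) (n - i) (by omega) (by omega)
      (by omega)
    omega
  · rw [columnOfList_apply_one h1 h2 (by omega)]
    have := hl_le (n - i) (by omega)
    omega
  · simp only [LeftIdx] at h
    omega

lemma ncard_columnSeqs_eq_ncard_catalanSeqs (n : ℕ) :
    (ColumnSeqs n).ncard = (catalanSeqs n).ncard := by
  symm
  refine Set.ncard_congr (fun l _ => columnOfList n l) (fun l hl => columnOfList_mem hl) ?_ ?_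
  · intro l l' hl hl' h
    have hlen := hl.1
    have hlen' := hl'.1
    refine List.ext_getElem (hlen.trans hlen'.symm) fun t ht ht' => ?_
    have := congrFun (congrFun h (n - t)) 1
    rw [columnOfList_apply_one (by omega) (Nat.sub_le n t) (by omega),
      columnOfList_apply_one (by omega) (Nat.sub_le n t) (by omega)] at this
    simpa [show n - (n - t) = t by omega] using this
  · rintro X ⟨hpos, hmono, hle, hzero⟩
    refine ⟨List.ofFn fun t : Fin n => (X (n - t) 1 - 1).toNat, ⟨by simp, ?_, ?_⟩, ?_⟩
    · refine List.isChain_iff_pairwise.1 (List.isChain_ofFn.2 fun t ht => ?_)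
      have := hmono (n - (t + 1)) (by omega) (by omega)
      rw [show n - (t + 1) + 1 = n - t by omega] at this
      simp only
      omega
    · intro t ht
      simp only [List.getElem_ofFn]
      have := hle (n - t) (by simp at ht; omega) (by omega)
      omega
    · funext i j
      by_cases hij : LeftIdx n 1 i j
      · obtain ⟨h1, h2, h3, h4⟩ := hij
        obtain rfl : j = 1 := by omega
        rw [columnOfList_apply_one h2 h3 (by simp; omega)]
        have := hpos i h2 h3
        simp only [List.getElem_ofFn, show n - (n - i) = i by omega]
        omega
      · rw [hzero i j hij]
        exact if_neg fun h => hij ⟨by omega, by omega, by omega, by omega⟩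

theorem stmt7_general (n : ℕ) :
    LeftGogTrapezoids n 1 = ColumnSeqs n ∧
    LeftGogamTrapezoids n 1 = ColumnSeqs n ∧
    (ColumnSeqs n).ncard = catalan n := by
  refine ⟨leftGogTrapezoids_one n, leftGogamTrapezoids_one n, ?_⟩
  rw [ncard_columnSeqs_eq_ncard_catalanSeqs, ← Nat.card_coe_set_eq, card_catalanSeqs]

/-- The `(n,1)` left Gog and the `(n,1)` left GOGAm trapezoids both coincide with the
set of nondecreasing sequences `X n 1, ..., X 1 1` of positive integers with
`X j 1 ≤ n - j + 1`; in particular the identity is a bijection between them, and they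
are counted by the Catalan number `C n`. -/
theorem stmt7 (n : ℕ) (hn : 1 ≤ n) :
    LeftGogTrapezoids n 1 = ColumnSeqs n ∧
    LeftGogamTrapezoids n 1 = ColumnSeqs n ∧
    (ColumnSeqs n).ncard = catalan n :=
  stmt7_general n
end

section
/- Let X = (X_{i,j}), with n ≥ i ≥ j ≥ 1 and j ≤ 2, be an array of positive integers satisfying the Gelfand-Tsetlin inequalities on these indices (X_{i+1,1} ≤ X_{i,1} ≤ X_{i+1,2} and X_{i+1,2} ≤ X_{i,2} whenever defined). Then X is an (n,2) left GOGAm trapezoid if and only if for all 2 ≤ i ≤ n one has X_{i,2} ≤ n−i+2 and X_{i,2} − X_{i−1,1} + X_{i,1} ≤ n−i+1. -/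
/-!
In a Gelfand-Tsetlin triangle the entries increase along the diagonals `(a + t, b + t)`. So in
the GOGAm inequality for the sequence `n, n - 1, …, n - m + 1` followed by `c` or by `1`, every
summand but the last is nonnegative; this gives `Y n c ≤ c` and
`Y n (n - i + 2) - Y (i - 1) 1 + Y i 1 ≤ n - i + 1`, and walking down the diagonal from
`Y n (n - i + 2)` to `Y i 2` yields both conditions. Conversely, copy column 2 of the trapezoid
along the diagonals: then every GOGAm sum telescopes to its last one or two summands, which are
bounded by the two conditions.
-/

open Finset

namespace IsGT

variable {n : ℕ} {Y : ℕ → ℕ → ℤ}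

theorem le_add_add_s8 (hY : IsGT n Y) {a b : ℕ} (t : ℕ) (hb : 1 ≤ b) (hba : b ≤ a)
    (han : a + t ≤ n) : Y a b ≤ Y (a + t) (b + t) := by
  induction t with
  | zero => rfl
  | succ t ih =>
    exact (ih (by omega)).trans (hY.2 (a + t) (b + t) (by omega) (by omega) (by omega)).2

theorem diag_mono (hY : IsGT n Y) {b c : ℕ} (t : ℕ) (hc : 1 ≤ c) (hcb : c ≤ b)
    (hbn : b + t ≤ n) : Y (c + t) c ≤ Y (b + t) b := by
  obtain ⟨d, rfl⟩ := Nat.exists_eq_add_of_le hcb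
  have h := hY.le_add_add_s8 d hc (Nat.le_add_right c t) (by omega)
  rwa [add_right_comm c t d] at h

theorem sum_chain_nonneg (hY : IsGT n Y) (j : ℕ → ℕ) (m : ℕ)
    (hj : ∀ t < m, 1 ≤ j (t + 1) ∧ j (t + 1) ≤ j t ∧ j t + t ≤ n) :
    0 ≤ ∑ t ∈ range m, (Y (j t + t) (j t) - Y (j (t + 1) + t) (j (t + 1))) :=
  sum_nonneg fun t ht => by
    obtain ⟨h1, hle, hn⟩ := hj t (mem_range.1 ht)
    exact sub_nonneg.2 (hY.diag_mono t h1 hle hn)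

end IsGT

def stair (n m t : ℕ) : ℕ := if t < m then n - t else 1

namespace IsGogam

variable {n : ℕ} {Y : ℕ → ℕ → ℤ}

theorem top_le (hY : IsGogam n Y) {c : ℕ} (hc : 1 ≤ c) (hcn : c ≤ n) : Y n c ≤ c := by
  rcases hcn.eq_or_lt with rfl | hcn
  · exact hY.2.1
  have key := hY.2.2 c hc (by omega) (stair n (n - c + 1)) (by simp [stair])
    (fun t ht => by simp only [stair]; split_ifs <;> omega)
    (by simp only [stair]; split_ifs <;> omega)
  have hlast : stair n (n - c + 1) (n - c) = c := by simp only [stair]; split_ifs <;> omega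
  rw [hlast, show c + (n - c) = n by omega] at key
  have hsum := hY.1.sum_chain_nonneg (stair n (n - c + 1)) (n - c) fun t ht => by
    simp only [stair]; split_ifs <;> omega
  linarith

theorem top_sub_add_le (hY : IsGogam n Y) {i : ℕ} (hi : 2 ≤ i) (hin : i ≤ n) :
    Y n (n - i + 2) - Y (i - 1) 1 + Y i 1 ≤ (n : ℤ) - i + 1 := by
  have key := hY.2.2 (n - i + 1) (by omega) (by omega) (stair n (i - 1))
    (by simp only [stair]; split_ifs <;> omega)
    (fun t ht => by simp only [stair]; split_ifs <;> omega)
    (by simp only [stair]; split_ifs <;> omega)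
  rw [show n - (n - i + 1) = i - 2 + 1 by omega, sum_range_succ] at key
  have hsum := hY.1.sum_chain_nonneg (stair n (i - 1)) (i - 2) fun t ht => by
    simp only [stair]; split_ifs <;> omega
  have h2 : stair n (i - 1) (i - 2) = n - i + 2 := by simp only [stair]; split_ifs <;> omega
  have h1 : stair n (i - 1) (i - 2 + 1) = 1 := by simp only [stair]; split_ifs <;> omega
  rw [h2, h1, show n - i + 2 + (i - 2) = n by omega, show 1 + (i - 2) = i - 1 by omega,
    show 1 + (i - 2 + 1) = i by omega] at key
  have hk : ((n - i + 1 : ℕ) : ℤ) = n - i + 1 := by omega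
  linarith

end IsGogam

theorem apply_add_le_apply_add_of_succ_lt {j : ℕ → ℕ} {m : ℕ} (hdec : ∀ t < m, j (t + 1) < j t)
    {s t : ℕ} (hst : s ≤ t) (htm : t ≤ m) : j t + t ≤ j s + s := by
  induction t, hst using Nat.le_induction with
  | base => exact le_rfl
  | succ t hst ih =>
    have := hdec t (by omega)
    have := ih (by omega)
    omega

def twoColExt (X : ℕ → ℕ → ℤ) (i j : ℕ) : ℤ := if j ≤ 1 then X i 1 else X (i - j + 2) 2

theorem twoColExt_one (X : ℕ → ℕ → ℤ) (i : ℕ) : twoColExt X i 1 = X i 1 := if_pos le_rfl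

theorem twoColExt_of_two_le (X : ℕ → ℕ → ℤ) (i : ℕ) {j : ℕ} (hj : 2 ≤ j) :
    twoColExt X i j = X (i - j + 2) 2 := if_neg (by omega)

theorem twoColExt_add_self (X : ℕ → ℕ → ℤ) {b : ℕ} (t : ℕ) (hb : 2 ≤ b) :
    twoColExt X (b + t) b = X (t + 2) 2 := by
  rw [twoColExt_of_two_le X _ hb, Nat.add_sub_cancel_left]

theorem twoColExt_eq (X : ℕ → ℕ → ℤ) {i j : ℕ} (hj1 : 1 ≤ j) (hji : j ≤ i) (hj2 : j ≤ 2) :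
    twoColExt X i j = X i j := by
  obtain rfl | rfl : j = 1 ∨ j = 2 := by omega
  · exact twoColExt_one X i
  · rw [twoColExt_of_two_le X i le_rfl, Nat.sub_add_cancel hji]

theorem isGT_twoColExt {n : ℕ} {X : ℕ → ℕ → ℤ}
    (hpos : ∀ i j, 1 ≤ j → j ≤ i → i ≤ n → j ≤ 2 → 1 ≤ X i j)
    (hGT1 : ∀ i, 1 ≤ i → i + 1 ≤ n → X (i+1) 1 ≤ X i 1 ∧ X i 1 ≤ X (i+1) 2)
    (hGT2 : ∀ i, 2 ≤ i → i + 1 ≤ n → X (i+1) 2 ≤ X i 2) :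
    IsGT n (twoColExt X) := by
  refine ⟨fun i j hj hji hin => ?_, fun i j hj hji hin => ?_⟩
  · rcases (show j = 1 ∨ 2 ≤ j by omega) with rfl | hj2
    · rw [twoColExt_one]
      exact hpos i 1 le_rfl hji hin (by omega)
    · rw [twoColExt_of_two_le X i hj2]
      exact hpos _ 2 (by omega) (by omega) (by omega) le_rfl
  · rcases (show j = 1 ∨ 2 ≤ j by omega) with rfl | hj2
    · rw [twoColExt_one, twoColExt_one, twoColExt_of_two_le X _ le_rfl,
        show i + 1 - 2 + 2 = i + 1 by omega]
      exact hGT1 i hji hin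
    · rw [twoColExt_of_two_le X _ hj2, twoColExt_of_two_le X _ hj2,
        twoColExt_of_two_le X _ (by omega : 2 ≤ j + 1),
        show i + 1 - j + 2 = i - j + 2 + 1 by omega, show i + 1 - (j + 1) + 2 = i - j + 2 by omega]
      exact ⟨hGT2 _ (by omega) (by omega), le_rfl⟩

theorem sum_twoColExt_eq_zero {X : ℕ → ℕ → ℤ} (j : ℕ → ℕ) (m : ℕ) (hj : ∀ t ≤ m, 2 ≤ j t) :
    ∑ t ∈ range m,
      (twoColExt X (j t + t) (j t) - twoColExt X (j (t + 1) + t) (j (t + 1))) = 0 :=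
  sum_eq_zero fun t ht => by
    have ht := mem_range.1 ht
    rw [twoColExt_add_self X t (hj t ht.le), twoColExt_add_self X t (hj (t + 1) ht), sub_self]

theorem twoColExt_chain_le {n : ℕ} {X : ℕ → ℕ → ℤ} (hn : 2 ≤ n)
    (h : ∀ i, 2 ≤ i → i ≤ n →
      X i 2 ≤ (n : ℤ) - i + 2 ∧ X i 2 - X (i-1) 1 + X i 1 ≤ (n : ℤ) - i + 1)
    (j : ℕ → ℕ) (m : ℕ) (hj0 : j 0 = n) (hdec : ∀ t < m, j (t + 1) < j t) (hjm : 1 ≤ j m) :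
    ∑ t ∈ range m, (twoColExt X (j t + t) (j t) - twoColExt X (j (t + 1) + t) (j (t + 1)))
      + twoColExt X (j m + m) (j m) ≤ (n : ℤ) - m := by
  have hmn : j m + m ≤ n := by
    simpa [hj0] using apply_add_le_apply_add_of_succ_lt hdec (Nat.zero_le m) le_rfl
  have hcol : ∀ t < m, 2 ≤ j t := fun t ht => by
    have := apply_add_le_apply_add_of_succ_lt hdec ht.le le_rfl
    omega
  rcases (show j m = 1 ∨ 2 ≤ j m by omega) with hjm1 | hjm2
  · obtain ⟨m, rfl⟩ : ∃ m', m = m' + 1 :=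
      Nat.exists_eq_add_one.2 (Nat.pos_of_ne_zero (by rintro rfl; omega))
    rw [sum_range_succ, sum_twoColExt_eq_zero j m fun t ht => hcol t (by omega), hjm1,
      twoColExt_add_self X m (hcol m (by omega)), twoColExt_one, twoColExt_one,
      show 1 + m = m + 2 - 1 by omega, show 1 + (m + 1) = m + 2 by omega]
    have := (h (m + 2) le_add_self (by omega)).2
    push_cast at this ⊢
    linarith
  · rw [sum_twoColExt_eq_zero j m fun t ht => ?_, twoColExt_add_self X m hjm2]
    · have := (h (m + 2) le_add_self (by omega)).1
      push_cast at this
      linarith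
    · rcases ht.eq_or_lt with rfl | ht
      exacts [hjm2, hcol t ht]

theorem isGogam_twoColExt {n : ℕ} {X : ℕ → ℕ → ℤ} (hn : 2 ≤ n)
    (hpos : ∀ i j, 1 ≤ j → j ≤ i → i ≤ n → j ≤ 2 → 1 ≤ X i j)
    (hGT1 : ∀ i, 1 ≤ i → i + 1 ≤ n → X (i+1) 1 ≤ X i 1 ∧ X i 1 ≤ X (i+1) 2)
    (hGT2 : ∀ i, 2 ≤ i → i + 1 ≤ n → X (i+1) 2 ≤ X i 2)
    (h : ∀ i, 2 ≤ i → i ≤ n →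
      X i 2 ≤ (n : ℤ) - i + 2 ∧ X i 2 - X (i-1) 1 + X i 1 ≤ (n : ℤ) - i + 1) :
    IsGogam n (twoColExt X) := by
  refine ⟨isGT_twoColExt hpos hGT1 hGT2, ?_, fun k _ hkn j hj0 hdec hlast => ?_⟩
  · rw [twoColExt_of_two_le X n hn, Nat.sub_self]
    have := (h 2 le_rfl hn).1
    push_cast at this
    linarith
  · have := twoColExt_chain_le hn h j (n - k) hj0 hdec hlast
    have hk : (n : ℤ) - (n - k : ℕ) = k := by omega
    linarith

/-- Characterization of `(n,2)` left GOGAm trapezoids: a two-column Gelfand-Tsetlin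
trapezoid extends to a GOGAm triangle of size `n` iff `X i 2 ≤ n - i + 2` and
`X i 2 - X (i-1) 1 + X i 1 ≤ n - i + 1` for all `2 ≤ i ≤ n`. -/
theorem stmt8 (n : ℕ) (hn : 2 ≤ n) (X : ℕ → ℕ → ℤ)
    (hpos : ∀ i j, 1 ≤ j → j ≤ i → i ≤ n → j ≤ 2 → 1 ≤ X i j)
    (hGT1 : ∀ i, 1 ≤ i → i + 1 ≤ n → X (i+1) 1 ≤ X i 1 ∧ X i 1 ≤ X (i+1) 2)
    (hGT2 : ∀ i, 2 ≤ i → i + 1 ≤ n → X (i+1) 2 ≤ X i 2) :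
    (∃ Y : ℕ → ℕ → ℤ, IsGogam n Y ∧
        ∀ i j, 1 ≤ j → j ≤ i → i ≤ n → j ≤ 2 → X i j = Y i j) ↔
    (∀ i, 2 ≤ i → i ≤ n →
      X i 2 ≤ (n : ℤ) - i + 2 ∧ X i 2 - X (i-1) 1 + X i 1 ≤ (n : ℤ) - i + 1) := by
  constructor
  · rintro ⟨Y, hY, hXY⟩ i hi hin
    have hdiag := hY.1.le_add_add_s8 (n - i) one_le_two hi (by omega)
    rw [Nat.add_sub_cancel' hin, add_comm 2] at hdiag
    have htop := hY.top_le (c := n - i + 2) (by omega) (by omega)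
    have hsum := hY.top_sub_add_le hi hin
    rw [hXY i 2 (by omega) hi hin le_rfl, hXY (i - 1) 1 le_rfl (by omega) (by omega) (by omega),
      hXY i 1 le_rfl (by omega) hin (by omega)]
    have hc : ((n - i + 2 : ℕ) : ℤ) = n - i + 2 := by omega
    constructor <;> linarith
  · exact fun h => ⟨twoColExt X, isGogam_twoColExt hn hpos hGT1 hGT2 h,
      fun i j hj1 hji _ hj2 => (twoColExt_eq X hj1 hji hj2).symm⟩
end

section
/- Let X be a Gog triangle of size n with μ(X) inversions and ν(X) coinversions. Then (μ(X), ν(X)) belongs to A_n; that is, there exists k with 0 ≤ k ≤ n−1 such that μ(X) ≥ k(k+1)/2, ν(X) ≥ (n−k−1)(n−k)/2, and μ(X) + ν(X) ≤ n(n−1)/2. -/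
/-!
In a Gelfand-Tsetlin triangle the entries weakly increase down each column and weakly decrease
down each diagonal, and a step that is not an inversion (resp. coinversion) changes the entry by
at least one. Hence, for `j ≤ r ≤ n`, column `j` above row `r` carries at least
`d(r, j) = (n - r) - (X r j - j)` inversions and the diagonal from `(r, j)` to the top row carries
at least `X r j - j = (n - r) - d(r, j)` coinversions, the top row being `1, …, n`.

Let `k ≤ n - 1` be maximal such that every column `j ≤ k` has a deficit `d(r, j) ≥ k + 1 - j`:
the columns `1, …, k` give `k(k+1)/2` inversions. By maximality some column `j ≤ k + 1` has all
deficits `≤ k + 1 - j`, so the `n - 1 - k` diagonals starting at `(j + c, j)` give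
`(n-1-k)(n-k)/2` coinversions. Strict rows forbid a cell to be both an inversion and a
coinversion, which bounds `μ + ν` by the number `n(n-1)/2` of cells.
-/

open Finset

theorem sum_range_sub_eq_mul_succ_div_two (k : ℕ) :
    ∑ i ∈ range k, (k - i) = k * (k + 1) / 2 := by
  induction k with
  | zero => simp
  | succ k ih =>
    rw [sum_range_succ', Nat.sub_zero]
    simp only [Nat.add_sub_add_right, ih]
    have : (k + 1) * (k + 1 + 1) = k * (k + 1) + 2 * (k + 1) := by ring
    omega

theorem mul_succ_div_two_le_card {α : Type*} {s : Finset α} (f : α → ℕ) {k : ℕ}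
    (h : ∀ i < k, k - i ≤ #{a ∈ s | f a = i}) : k * (k + 1) / 2 ≤ #s :=
  calc k * (k + 1) / 2 = ∑ i ∈ range k, (k - i) := (sum_range_sub_eq_mul_succ_div_two k).symm
    _ ≤ ∑ i ∈ range k, #{a ∈ s | f a = i} := sum_le_sum fun i hi ↦ h i (mem_range.1 hi)
    _ ≤ #s := by
      rw [sum_card_fiberwise_eq_card_filter]
      exact card_filter_le _ _

theorem sub_le_card_filter_eq_succ {a : ℕ → ℤ} {M : ℕ} (ha : ∀ m < M, a m ≤ a (m + 1)) :
    (M : ℤ) - (a M - a 0) ≤ #{m ∈ range M | a m = a (m + 1)} := by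
  induction M with
  | zero => simp
  | succ M ih =>
    have hprev := ih fun m hm ↦ ha m (by omega)
    have hstep := ha M (by omega)
    rw [range_add_one, filter_insert]
    split_ifs
    · rw [card_insert_of_notMem (by simp)]
      push_cast
      omega
    · omega

theorem exists_le_maximal {P : ℕ → Prop} (h0 : P 0) (N : ℕ) :
    ∃ k ≤ N, P k ∧ (k < N → ¬P (k + 1)) := by
  classical
  exact ⟨Nat.findGreatest P N, Nat.findGreatest_le N, Nat.findGreatest_spec (Nat.zero_le N) h0,
    fun hk ↦ Nat.findGreatest_is_greatest (Nat.lt_succ_self _) hk⟩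

namespace GelfandTsetlin

def cells (n : ℕ) : Finset (ℕ × ℕ) :=
  ((range n).sigma fun i ↦ Icc 1 i).map (Equiv.sigmaEquivProd ℕ ℕ).toEmbedding

theorem mem_cells {n : ℕ} {p : ℕ × ℕ} : p ∈ cells n ↔ 1 ≤ p.2 ∧ p.2 ≤ p.1 ∧ p.1 + 1 ≤ n := by
  simp only [cells, mem_map_equiv, mem_sigma, mem_range, mem_Icc, Equiv.sigmaEquivProd,
    Equiv.coe_fn_symm_mk]
  omega

theorem card_cells (n : ℕ) : #(cells n) = n * (n - 1) / 2 := by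
  simp [cells, card_sigma, Finset.sum_range_id]

def inversions (n : ℕ) (X : ℕ → ℕ → ℤ) : Finset (ℕ × ℕ) :=
  {p ∈ cells n | X p.1 p.2 = X (p.1 + 1) p.2}

def coinversions (n : ℕ) (X : ℕ → ℕ → ℤ) : Finset (ℕ × ℕ) :=
  {p ∈ cells n | X p.1 p.2 = X (p.1 + 1) (p.2 + 1)}

variable {n : ℕ} {X : ℕ → ℕ → ℤ}

theorem invCount_eq_card : invCount n X = #(inversions n X) := by
  rw [invCount, ← Set.ncard_coe_finset]
  congr 1
  ext p
  simp [inversions, mem_cells, and_assoc]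

theorem coinvCount_eq_card : coinvCount n X = #(coinversions n X) := by
  rw [coinvCount, ← Set.ncard_coe_finset]
  congr 1
  ext p
  simp [coinversions, mem_cells, and_assoc]

theorem card_inversions_add_card_coinversions_le
    (hrow : ∀ i j, 1 ≤ j → j + 1 ≤ i → i ≤ n → X i j < X i (j + 1)) :
    #(inversions n X) + #(coinversions n X) ≤ n * (n - 1) / 2 := by
  have hsub : coinversions n X ⊆ {p ∈ cells n | ¬X p.1 p.2 = X (p.1 + 1) p.2} := by
    intro p hp
    simp only [coinversions, mem_filter, mem_cells] at hp ⊢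
    obtain ⟨⟨hj, hji, hin⟩, hco⟩ := hp
    have := hrow (p.1 + 1) p.2 hj (by omega) hin
    exact ⟨⟨hj, hji, hin⟩, by omega⟩
  calc #(inversions n X) + #(coinversions n X)
      ≤ #(inversions n X) + #{p ∈ cells n | ¬X p.1 p.2 = X (p.1 + 1) p.2} := by
        gcongr
    _ = n * (n - 1) / 2 := by rw [inversions, card_filter_add_card_filter_not, card_cells]

theorem sub_le_card_inversions_column (hGT : IsGT n X) {r j : ℕ} (hj : 1 ≤ j) (hjr : j ≤ r)
    (hrn : r ≤ n) : (n - r : ℤ) - (X r j - X n j) ≤ #{p ∈ inversions n X | p.2 = j} := by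
  have hflat := sub_le_card_filter_eq_succ (a := fun m ↦ -X (r + m) j) (M := n - r)
    fun m hm ↦ neg_le_neg (hGT.2 (r + m) j hj (by omega) (by omega)).1
  simp only [Nat.add_sub_cancel' hrn, Nat.add_zero, neg_inj] at hflat
  refine (le_of_eq ?_).trans (hflat.trans (Nat.cast_le.2 ?_))
  · push_cast [hrn]
    ring
  refine card_le_card_of_injOn (fun m ↦ (r + m, j)) (fun m hm ↦ ?_) fun _ _ _ _ h ↦ ?_
  · simp only [mem_coe, mem_filter, mem_range] at hm
    simp only [inversions, mem_coe, mem_filter, mem_cells, and_true]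
    exact ⟨⟨hj, by omega, by omega⟩, hm.2⟩
  · simpa using h

theorem sub_le_card_coinversions_diagonal (hGT : IsGT n X) {r j : ℕ} (hj : 1 ≤ j) (hjr : j ≤ r)
    (hrn : r ≤ n) :
    (n - r : ℤ) - (X n (j + (n - r)) - X r j) ≤ #{p ∈ coinversions n X | p.1 - p.2 = r - j} := by
  have hflat := sub_le_card_filter_eq_succ (a := fun m ↦ X (r + m) (j + m)) (M := n - r)
    fun m hm ↦ (hGT.2 (r + m) (j + m) (by omega) (by omega) (by omega)).2
  simp only [Nat.add_sub_cancel' hrn, Nat.add_zero] at hflat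
  refine (le_of_eq ?_).trans (hflat.trans (Nat.cast_le.2 ?_))
  · push_cast [hrn]
    ring
  refine card_le_card_of_injOn (fun m ↦ (r + m, j + m)) (fun m hm ↦ ?_) fun _ _ _ _ h ↦ ?_
  · simp only [mem_coe, mem_filter, mem_range] at hm
    simp only [coinversions, mem_coe, mem_filter, mem_cells]
    exact ⟨⟨⟨by omega, by omega, by omega⟩, hm.2⟩, by omega⟩
  · simpa using h

theorem mul_succ_div_two_le_card_inversions (hGT : IsGT n X)
    (htop : ∀ j, 1 ≤ j → j ≤ n → X n j = j) {k : ℕ}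
    (h : ∀ j, 1 ≤ j → j ≤ k → ∃ r, j ≤ r ∧ r ≤ n ∧ (k + 1 - j : ℤ) ≤ (n - r) - (X r j - j)) :
    k * (k + 1) / 2 ≤ #(inversions n X) := by
  refine mul_succ_div_two_le_card (fun p ↦ p.2 - 1) fun i hi ↦ ?_
  obtain ⟨r, hr, hrn, hdef⟩ := h (i + 1) (by omega) (by omega)
  have hcol := sub_le_card_inversions_column hGT (by omega) hr hrn
  rw [htop (i + 1) (by omega) (by omega)] at hcol
  have hfib : {p ∈ inversions n X | p.2 - 1 = i} = {p ∈ inversions n X | p.2 = i + 1} :=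
    filter_congr fun p hp ↦ by
      have := (mem_cells.1 (mem_filter.1 hp).1).1
      omega
  rw [hfib]
  push_cast at hdef hcol
  omega

theorem mul_succ_div_two_le_card_coinversions (hGT : IsGT n X)
    (htop : ∀ j, 1 ≤ j → j ≤ n → X n j = j) {b j : ℕ} (hj : 1 ≤ j) (hjb : j + b ≤ n)
    (h : ∀ r, j ≤ r → r ≤ n → (n - r : ℤ) - (X r j - j) ≤ n - b - j) :
    b * (b + 1) / 2 ≤ #(coinversions n X) := by
  refine mul_succ_div_two_le_card (fun p ↦ p.1 - p.2) fun c hc ↦ ?_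
  have hdiag := sub_le_card_coinversions_diagonal hGT hj (r := j + c) (by omega) (by omega)
  rw [htop _ (by omega) (by omega), Nat.add_sub_cancel_left] at hdiag
  have hdef := h (j + c) (by omega) (by omega)
  push_cast at hdef hdiag
  omega

end GelfandTsetlin

open GelfandTsetlin

/-- The pair (number of inversions, number of coinversions) of a Gog triangle of size
`n` belongs to `A_n = ∪_k A_{n,k}`. -/
theorem stmt11 (n : ℕ) (X : ℕ → ℕ → ℤ) (hX : IsGog n X) :
    ∃ k : ℕ, k ≤ n - 1 ∧
      k * (k + 1) / 2 ≤ invCount n X ∧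
      (n - k - 1) * (n - k) / 2 ≤ coinvCount n X ∧
      invCount n X + coinvCount n X ≤ n * (n - 1) / 2 := by
  obtain ⟨hGT, hrow, htop⟩ := hX
  rw [invCount_eq_card, coinvCount_eq_card]
  obtain ⟨k, hkn, hcols, hmax⟩ := exists_le_maximal
    (P := fun k ↦ ∀ j, 1 ≤ j → j ≤ k → ∃ r, j ≤ r ∧ r ≤ n ∧ (k + 1 - j : ℤ) ≤ (n - r) - (X r j - j))
    (fun _ _ _ ↦ by omega) (n - 1)
  refine ⟨k, hkn, mul_succ_div_two_le_card_inversions hGT htop hcols, ?_,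
    card_inversions_add_card_coinversions_le hrow⟩
  rcases hkn.lt_or_eq with hk | rfl
  · have hnext := hmax hk
    push Not at hnext
    obtain ⟨j, hj, hjk, hdef⟩ := hnext
    rw [show n - k = n - k - 1 + 1 by omega]
    refine mul_succ_div_two_le_card_coinversions hGT htop hj (by omega) fun r hr hrn ↦ ?_
    have := hdef r hr hrn
    push_cast at this ⊢
    omega
  · simp [show n - (n - 1) - 1 = 0 by omega]
end

section
/- Let n ≥ 1 and let (i,j) be a pair of nonnegative integers belonging to A_n, i.e. there exists k with 0 ≤ k ≤ n−1 such that i ≥ k(k+1)/2, j ≥ (n−k−1)(n−k)/2, and i+j ≤ n(n−1)/2. Then there exists a Gog triangle of size n with exactly i inversions and exactly j coinversions. -/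
/-!
Write `n = k + t + 1`. Place two staircase shapes in a `k × t` board without overlap: one with
row lengths `r j` anchored at the top-left corner, one with column heights `c w` anchored at the
bottom-right corner. From such a pair one builds an explicit Gog triangle whose column `j ≤ k`
carries `k + 1 - j + r j` inversions and whose `w`-th diagonal carries `t + 1 - w + c w`
coinversions, so that it has `k(k+1)/2 + ∑ r` inversions and `t(t+1)/2 + ∑ c` coinversions.
The condition `(i, j) ∈ A_{n,k}` says precisely that `i - k(k+1)/2` and `j - t(t+1)/2` cells fit
into the board together, and filling the board column by column, the first cells from one end
and the last cells from the other, produces the required pair of shapes.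
-/

open Finset

theorem sum_Icc_succ_sub (m : ℕ) : ∑ j ∈ Icc 1 m, (m + 1 - j) = m * (m + 1) / 2 := by
  have h := sum_range_id (m + 1)
  rw [Nat.add_sub_cancel, Nat.mul_comm, sum_range_succ'] at h
  rw [← h, add_zero]
  refine sum_nbij' (fun j ↦ m - j) (fun j ↦ m - j) ?_ ?_ ?_ ?_ ?_ <;> intro a ha <;>
    simp only [mem_Icc, mem_range] at ha ⊢ <;> omega

/-- Hermite's identity. -/
theorem sum_range_add_div {k : ℕ} (hk : 0 < k) (D : ℕ) : ∑ i ∈ range k, (D + i) / k = D := by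
  induction D with
  | zero => simpa using sum_eq_zero fun i hi ↦ Nat.div_eq_of_lt (mem_range.1 hi)
  | succ D ih =>
    obtain ⟨m, rfl⟩ : ∃ m, k = m + 1 := ⟨k - 1, by omega⟩
    have hshift : ∑ i ∈ range m, (D + 1 + i) / (m + 1) = ∑ i ∈ range m, (D + (i + 1)) / (m + 1) :=
      sum_congr rfl fun i _ ↦ by rw [add_assoc, add_comm 1 i]
    rw [sum_range_succ', add_zero] at ih
    rw [sum_range_succ, hshift, show D + 1 + m = D + (m + 1) by omega, Nat.add_div_right _ hk]
    omega

theorem add_add_one_mul_div_two (k t : ℕ) :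
    (k + t + 1) * (k + t) / 2 = k * (k + 1) / 2 + t * (t + 1) / 2 + k * t := by
  have hk := Nat.div_mul_cancel (Nat.even_mul_succ_self k).two_dvd
  have ht := Nat.div_mul_cancel (Nat.even_mul_succ_self t).two_dvd
  refine Nat.div_eq_of_eq_mul_left two_pos ?_
  linarith

theorem card_biUnion_image_Icc {ι α : Type*} [DecidableEq α] {s : Finset ι} {lo : ι → ℕ}
    {hi : ℕ} {f : ι → ℕ → α} (g : α → ι) (hf : ∀ a, Function.Injective (f a))
    (hg : ∀ a ∈ s, ∀ i, lo a ≤ i → g (f a i) = a) :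
    #(s.biUnion fun a ↦ (Icc (lo a) hi).image (f a)) = ∑ a ∈ s, (hi + 1 - lo a) := by
  rw [card_biUnion]
  · simp [card_image_of_injective _ (hf _)]
  · intro a ha a' ha' hne
    simp only [Function.onFun, disjoint_left, mem_image, mem_Icc, not_exists, not_and]
    rintro _ ⟨i, hi, rfl⟩ i' hi' he
    exact hne (by rw [← hg a ha i hi.1, ← he, hg a' ha' i' hi'.1])

namespace Gog

variable {k t : ℕ} {r c : ℕ → ℕ}

/-- `r j` (`1 ≤ j ≤ k`) are the row lengths of a shape in the top-left corner of a `k × t` board,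
`c w` (`1 ≤ w ≤ t`) the column heights of a shape in its bottom-right corner, the column of `c w`
being the `w`-th one from the right. -/
structure IsStaircasePair (k t : ℕ) (r c : ℕ → ℕ) : Prop where
  r_antitone : Antitone r
  c_antitone : Antitone c
  r_eq_zero : ∀ j, k < j → r j = 0
  r_le : ∀ j, 1 ≤ j → r j ≤ t
  c_le : ∀ w, c w ≤ k
  disjoint : ∀ j w, 1 ≤ w → w ≤ t → t + 1 ≤ r j + w → j + c w ≤ k

/-- The triangle of size `n = k + t + 1` is `X i j = j + excess k t r c i j`. Its entry is `j`,
equal to the one above it, from row `j + t - r j` on; otherwise it is `n - i + j`, equal to the one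
above and to the right, on the diagonal `w = i - j + 1` from row `k + w - c w` on. -/
def excess (k t : ℕ) (r c : ℕ → ℕ) (i j : ℕ) : ℕ :=
  if j + t ≤ i + r j then 0
  else if k + 1 ≤ j + c (i - j + 1) then k + t + 1 - i
  else j + t - i

def staircaseTriangle (k t : ℕ) (r c : ℕ → ℕ) (i j : ℕ) : ℤ := j + excess k t r c i j

theorem excess_top (j : ℕ) : excess k t r c (k + t + 1) j = 0 := by
  unfold excess
  split_ifs <;> omega

namespace IsStaircasePair

variable (h : IsStaircasePair k t r c)
include h

theorem excess_succ_le {i j : ℕ} (hji : j ≤ i) :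
    excess k t r c (i + 1) j ≤ excess k t r c i j := by
  have := h.c_antitone (show i - j + 1 ≤ i + 1 - j + 1 by omega)
  unfold excess
  split_ifs <;> omega

theorem excess_succ_eq_iff {i j : ℕ} (hji : j ≤ i) (hi : i ≤ k + t) :
    excess k t r c i j = excess k t r c (i + 1) j ↔ j + t ≤ i + r j := by
  have := h.c_antitone (show i - j + 1 ≤ i + 1 - j + 1 by omega)
  unfold excess
  split_ifs <;> omega

theorem excess_le_succ_succ {i j : ℕ} (hji : j ≤ i) :
    excess k t r c i j ≤ excess k t r c (i + 1) (j + 1) + 1 := by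
  have := h.r_antitone (Nat.le_add_right j 1)
  have := h.disjoint (j + 1) (i - j + 1) (by omega)
  have := h.c_le (i - j + 1)
  unfold excess
  rw [show i + 1 - (j + 1) = i - j by omega]
  split_ifs <;> omega

theorem excess_eq_succ_succ_iff {i j : ℕ} (hji : j ≤ i) (hi : i ≤ k + t) :
    excess k t r c i j = excess k t r c (i + 1) (j + 1) + 1 ↔
      i + r j < j + t ∧ k < j + c (i - j + 1) := by
  have := h.r_antitone (Nat.le_add_right j 1)
  have := h.disjoint (j + 1) (i - j + 1) (by omega)
  have := h.c_le (i - j + 1)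
  unfold excess
  rw [show i + 1 - (j + 1) = i - j by omega]
  split_ifs <;> constructor <;> intro <;> first | contradiction | omega

theorem excess_le_excess_succ {i j : ℕ} (hji : j < i) :
    excess k t r c i j ≤ excess k t r c i (j + 1) := by
  have := h.r_antitone (Nat.le_add_right j 1)
  have := h.c_antitone (Nat.le_add_right (i - j) 1)
  unfold excess
  rw [show i - (j + 1) + 1 = i - j by omega]
  split_ifs <;> omega

theorem isGog_staircaseTriangle : IsGog (k + t + 1) (staircaseTriangle k t r c) := by
  refine ⟨⟨fun i j hj _ _ ↦ ?_, fun i j _ hji _ ↦ ?_⟩, fun i j _ hji _ ↦ ?_, fun j _ _ ↦ ?_⟩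
  all_goals simp only [staircaseTriangle]
  · omega
  · have := h.excess_succ_le hji
    have := h.excess_le_succ_succ hji
    push_cast
    omega
  · have := h.excess_le_excess_succ hji
    push_cast
    omega
  · simp [excess_top]

theorem staircaseTriangle_eq_succ_iff {i j : ℕ} (hji : j ≤ i) (hi : i ≤ k + t) :
    staircaseTriangle k t r c i j = staircaseTriangle k t r c (i + 1) j ↔ j + t ≤ i + r j := by
  rw [staircaseTriangle, staircaseTriangle, add_right_inj, Nat.cast_inj]
  exact h.excess_succ_eq_iff hji hi

theorem staircaseTriangle_eq_succ_succ_iff {i j : ℕ} (hji : j ≤ i) (hi : i ≤ k + t) :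
    staircaseTriangle k t r c i j = staircaseTriangle k t r c (i + 1) (j + 1) ↔
      i + r j < j + t ∧ k < j + c (i - j + 1) := by
  rw [staircaseTriangle, staircaseTriangle, Nat.cast_add_one, ← h.excess_eq_succ_succ_iff hji hi]
  omega

theorem invCount_staircaseTriangle :
    invCount (k + t + 1) (staircaseTriangle k t r c) = k * (k + 1) / 2 + ∑ j ∈ Icc 1 k, r j := by
  have hset : {p : ℕ × ℕ | 1 ≤ p.2 ∧ p.2 ≤ p.1 ∧ p.1 + 1 ≤ k + t + 1 ∧
      staircaseTriangle k t r c p.1 p.2 = staircaseTriangle k t r c (p.1 + 1) p.2} =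
      ↑((Icc 1 k).biUnion fun j ↦ (Icc (j + t - r j) (k + t)).image fun i ↦ (i, j)) := by
    ext ⟨i, j⟩
    simp only [Set.mem_ofPred_eq, coe_biUnion, mem_coe, mem_Icc, Set.mem_iUnion, coe_image,
      Set.mem_image, Prod.mk.injEq, exists_prop]
    constructor
    · rintro ⟨hj, hji, hi, heq⟩
      have hinv := (h.staircaseTriangle_eq_succ_iff hji (by omega)).1 heq
      have := h.r_eq_zero j
      exact ⟨j, ⟨hj, by omega⟩, i, ⟨by omega, by omega⟩, rfl, rfl⟩
    · rintro ⟨j, ⟨hj, hjk⟩, i, ⟨hi, hik⟩, rfl, rfl⟩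
      have := h.r_le j hj
      exact ⟨hj, by omega, by omega, (h.staircaseTriangle_eq_succ_iff (by omega) hik).2 (by omega)⟩
  rw [invCount, hset, Set.ncard_coe_finset,
    card_biUnion_image_Icc Prod.snd (fun j ↦ Prod.mk_left_injective j) (fun _ _ _ _ ↦ rfl),
    ← sum_Icc_succ_sub, ← sum_add_distrib]
  refine sum_congr rfl fun j hj ↦ ?_
  obtain ⟨hj, hjk⟩ := mem_Icc.1 hj
  have := h.r_le j hj
  omega

theorem coinvCount_staircaseTriangle :
    coinvCount (k + t + 1) (staircaseTriangle k t r c) = t * (t + 1) / 2 + ∑ w ∈ Icc 1 t, c w := by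
  have hset : {p : ℕ × ℕ | 1 ≤ p.2 ∧ p.2 ≤ p.1 ∧ p.1 + 1 ≤ k + t + 1 ∧
      staircaseTriangle k t r c p.1 p.2 = staircaseTriangle k t r c (p.1 + 1) (p.2 + 1)} =
      ↑((Icc 1 t).biUnion fun w ↦ (Icc (k + w - c w) (k + t)).image fun i ↦ (i, i + 1 - w)) := by
    ext ⟨i, j⟩
    simp only [Set.mem_ofPred_eq, coe_biUnion, mem_coe, mem_Icc, Set.mem_iUnion, coe_image,
      Set.mem_image, Prod.mk.injEq, exists_prop]
    constructor
    · rintro ⟨hj, hji, hi, heq⟩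
      have hcoinv := (h.staircaseTriangle_eq_succ_succ_iff hji (by omega)).1 heq
      exact ⟨i - j + 1, ⟨by omega, by omega⟩, i, ⟨by omega, by omega⟩, rfl, by omega⟩
    · rintro ⟨w, ⟨hw, hwt⟩, i, ⟨hi, hik⟩, rfl, rfl⟩
      have := h.c_le w
      have := h.disjoint (i + 1 - w) w hw hwt
      refine ⟨by omega, by omega, by omega,
        (h.staircaseTriangle_eq_succ_succ_iff (by omega) hik).2 ?_⟩
      rw [show i - (i + 1 - w) + 1 = w by omega]
      omega
  rw [coinvCount, hset, Set.ncard_coe_finset,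
    card_biUnion_image_Icc (fun p ↦ p.1 + 1 - p.2) (fun _ _ _ he ↦ congrArg Prod.fst he)
      (fun w _ i hi ↦ by have := h.c_le w; dsimp only; omega),
    ← sum_Icc_succ_sub, ← sum_add_distrib]
  refine sum_congr rfl fun w hw ↦ ?_
  have := (mem_Icc.1 hw).2
  have := h.c_le w
  omega

end IsStaircasePair

/-- Filling a board with `k` rows column by column, `rowLength k D j` is the number of the first
`D` cells that lie in row `j`, and `colHeight k G w` the number of the first `G` cells that lie in
column `w`. -/
def rowLength (k D j : ℕ) : ℕ := if j ≤ k then (D + k - j) / k else 0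

def colHeight (k G w : ℕ) : ℕ := min k (G - k * (w - 1))

variable {D G : ℕ}

theorem antitone_rowLength : Antitone (rowLength k D) := by
  intro a a' ha
  unfold rowLength
  split_ifs
  · exact Nat.div_le_div_right (by omega)
  · omega
  · exact Nat.zero_le _
  · exact le_rfl

theorem antitone_colHeight : Antitone (colHeight k G) :=
  fun _ _ hw ↦ min_le_min_left _ (Nat.sub_le_sub_left (Nat.mul_le_mul_left k (by omega)) G)

theorem rowLength_le (hD : D ≤ k * t) {j : ℕ} (hj : 1 ≤ j) : rowLength k D j ≤ t := by
  unfold rowLength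
  split_ifs
  · rw [← Nat.lt_add_one_iff, Nat.div_lt_iff_lt_mul (by omega)]
    have : (t + 1) * k = k * t + k := by ring
    omega
  · exact Nat.zero_le _

theorem sum_rowLength (hD : D ≤ k * t) : ∑ j ∈ Icc 1 k, rowLength k D j = D := by
  rcases Nat.eq_zero_or_pos k with rfl | hk
  · simp_all
  have hrow : ∀ j ∈ Icc 1 k, rowLength k D j = (D + (k - j)) / k := fun j hj ↦ by
    rw [mem_Icc] at hj
    rw [rowLength, if_pos hj.2, Nat.add_sub_assoc hj.2]
  rw [sum_congr rfl hrow]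
  refine .trans ?_ (sum_range_add_div hk D)
  refine sum_nbij' (fun j ↦ k - j) (fun i ↦ k - i) ?_ ?_ ?_ ?_ ?_ <;> intro a ha <;>
    simp only [mem_Icc, mem_range] at ha ⊢ <;> omega

theorem sum_colHeight (hG : G ≤ k * t) : ∑ w ∈ Icc 1 t, colHeight k G w = G := by
  suffices ∀ t, ∑ w ∈ Icc 1 t, colHeight k G w = min (k * t) G by rw [this, min_eq_right hG]
  intro t
  induction t with
  | zero => simp
  | succ t ih =>
    rw [sum_Icc_succ_top (by omega), ih, colHeight, Nat.add_sub_cancel, Nat.mul_succ]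
    omega

theorem add_colHeight_le (hDG : D + G ≤ k * t) {j w : ℕ} (hw : 1 ≤ w) (hwt : w ≤ t)
    (hj : t + 1 ≤ rowLength k D j + w) : j + colHeight k G w ≤ k := by
  unfold rowLength at hj
  split_ifs at hj with hjk
  · have hk : 0 < k := Nat.pos_of_ne_zero fun hk ↦ by
      simp only [hk, Nat.div_zero, zero_add] at hj
      omega
    -- the cell in row `j`, column `t + 1 - w` is among the first `D`, hence not among the last `G`
    have hc : (t + 1 - w) * k ≤ D + k - j :=
      (Nat.le_div_iff_mul_le hk).1 (show t + 1 - w ≤ (D + k - j) / k by omega)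
    have : (t + 1 - w) * k + k * (w - 1) = k * t := by
      rw [mul_comm, ← mul_add]
      congr 1
      omega
    unfold colHeight
    omega
  · omega

theorem isStaircasePair_fill (hDG : D + G ≤ k * t) :
    IsStaircasePair k t (rowLength k D) (colHeight k G) where
  r_antitone := antitone_rowLength
  c_antitone := antitone_colHeight
  r_eq_zero _ hj := if_neg (by omega)
  r_le _ := rowLength_le (by omega)
  c_le _ := min_le_left _ _
  disjoint _ _ := add_colHeight_le hDG

end Gog

open Gog

/-- For every pair `(i,j)` in `A_n` there is a Gog triangle of size `n` with exactly
`i` inversions and `j` coinversions. -/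
theorem stmt12 (n : ℕ) (hn : 1 ≤ n) (i j k : ℕ) (hk : k ≤ n - 1)
    (hi : k * (k + 1) / 2 ≤ i) (hj : (n - k - 1) * (n - k) / 2 ≤ j)
    (hij : i + j ≤ n * (n - 1) / 2) :
    ∃ X : ℕ → ℕ → ℤ, IsGog n X ∧ invCount n X = i ∧ coinvCount n X = j := by
  obtain ⟨t, rfl⟩ : ∃ t, n = k + t + 1 := ⟨n - 1 - k, by omega⟩
  rw [show k + t + 1 - k - 1 = t by omega, show k + t + 1 - k = t + 1 by omega] at hj
  rw [Nat.add_sub_cancel, add_add_one_mul_div_two] at hij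
  have hfill : IsStaircasePair k t (rowLength k (i - k * (k + 1) / 2))
      (colHeight k (j - t * (t + 1) / 2)) := isStaircasePair_fill (by omega)
  refine ⟨_, hfill.isGog_staircaseTriangle, ?_, ?_⟩
  · rw [hfill.invCount_staircaseTriangle, sum_rowLength (t := t) (by omega)]
    omega
  · rw [hfill.coinvCount_staircaseTriangle, sum_colHeight (by omega)]
    omega
end

section
/- Let n ≥ 1 and 0 ≤ k ≤ n−1. There exists exactly one Gog triangle X of size n with exactly k(k+1)/2 inversions and exactly (n−k−1)(n−k)/2 coinversions; moreover its bottom entry satisfies X_{1,1} = n−k. -/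
open Finset

lemma ncard_cells_eq_sum_cols (n : ℕ) (P : ℕ → ℕ → Prop) [∀ i j, Decidable (P i j)] :
    {p : ℕ × ℕ | 1 ≤ p.2 ∧ p.2 ≤ p.1 ∧ p.1 + 1 ≤ n ∧ P p.1 p.2}.ncard =
      ∑ j ∈ range (n - 1), #{s ∈ range (n - (j + 1)) | P (j + 1 + s) (j + 1)} := by
  rw [← card_sigma, ← Set.ncard_coe_finset]
  refine Set.ncard_congr (fun p _ => ⟨p.2 - 1, p.1 - p.2⟩) ?_ ?_ ?_
  · rintro ⟨i, j⟩ ⟨h1, h2, h3, hP⟩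
    simp only [coe_sigma, Set.mem_sigma_iff, mem_coe, mem_range, mem_filter]
    refine ⟨by omega, by omega, ?_⟩
    rwa [show j - 1 + 1 + (i - j) = i by omega, show j - 1 + 1 = j by omega]
  · rintro ⟨i, j⟩ ⟨i', j'⟩ ⟨h1, h2, -⟩ ⟨h1', h2', -⟩ h
    simp only [Sigma.mk.injEq, heq_eq_eq] at h
    simp only [Prod.mk.injEq]
    omega
  · rintro ⟨j, s⟩ h
    simp only [coe_sigma, Set.mem_sigma_iff, mem_coe, mem_range, mem_filter] at h
    refine ⟨(j + 1 + s, j + 1), ⟨by omega, by omega, by omega, h.2.2⟩, ?_⟩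
    simp only [Sigma.mk.injEq, heq_eq_eq]
    omega

lemma ncard_cells_eq_sum_diags (n : ℕ) (P : ℕ → ℕ → Prop) [∀ i j, Decidable (P i j)] :
    {p : ℕ × ℕ | 1 ≤ p.2 ∧ p.2 ≤ p.1 ∧ p.1 + 1 ≤ n ∧ P p.1 p.2}.ncard =
      ∑ t ∈ range (n - 1), #{s ∈ range (n - (t + 1)) | P (t + 1 + s) (1 + s)} := by
  rw [← card_sigma, ← Set.ncard_coe_finset]
  refine Set.ncard_congr (fun p _ => ⟨p.1 - p.2, p.2 - 1⟩) ?_ ?_ ?_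
  · rintro ⟨i, j⟩ ⟨h1, h2, h3, hP⟩
    simp only [coe_sigma, Set.mem_sigma_iff, mem_coe, mem_range, mem_filter]
    refine ⟨by omega, by omega, ?_⟩
    rwa [show i - j + 1 + (j - 1) = i by omega, show 1 + (j - 1) = j by omega]
  · rintro ⟨i, j⟩ ⟨i', j'⟩ ⟨h1, h2, -⟩ ⟨h1', h2', -⟩ h
    simp only [Sigma.mk.injEq, heq_eq_eq] at h
    simp only [Prod.mk.injEq]
    omega
  · rintro ⟨t, s⟩ h
    simp only [coe_sigma, Set.mem_sigma_iff, mem_coe, mem_range, mem_filter] at h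
    refine ⟨(t + 1 + s, 1 + s), ⟨by omega, by omega, by omega, h.2.2⟩, ?_⟩
    simp only [Sigma.mk.injEq, heq_eq_eq]
    omega

lemma sum_range_const_tsub {a N : ℕ} (h : a ≤ N) :
    ∑ j ∈ range N, (a - j) = a * (a + 1) / 2 := by
  have hext : ∑ j ∈ range N, (a - j) = ∑ j ∈ range (a + 1), (a - j) := by
    rcases h.eq_or_lt with rfl | hlt
    · simp [sum_range_succ]
    · exact (sum_subset (range_subset_range.2 hlt) fun j _ hj => by
        simp only [mem_range] at hj; omega).symm
  have hreflect := sum_range_reflect (fun j => j) (a + 1)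
  rw [Nat.add_sub_cancel] at hreflect
  rw [hext, hreflect, sum_range_id, Nat.add_sub_cancel, Nat.mul_comm]

lemma le_of_mul_succ_div_two_le {a b : ℕ} (h : a * (a + 1) / 2 ≤ b * (b + 1) / 2) : a ≤ b := by
  by_contra! hba
  have : b * (b + 1) + 2 * (b + 1) ≤ a * (a + 1) := by nlinarith
  omega

namespace GogTriangle

section Counts

variable (n : ℕ) (X : ℕ → ℕ → ℤ)

def colInv (i j : ℕ) : ℕ :=
  #{s ∈ range (n - i) | X (i + s) j = X (i + s + 1) j}

def diagCoinv (i j : ℕ) : ℕ :=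
  #{s ∈ range (n - i) | X (i + s) (j + s) = X (i + s + 1) (j + s + 1)}

lemma colInv_le (i j : ℕ) : colInv n X i j ≤ n - i :=
  (card_filter_le _ _).trans (card_range _).le

lemma diagCoinv_le (i j : ℕ) : diagCoinv n X i j ≤ n - i :=
  (card_filter_le _ _).trans (card_range _).le

lemma colInv_of_lt {i : ℕ} (j : ℕ) (hi : i < n) :
    colInv n X i j = (if X i j = X (i + 1) j then 1 else 0) + colInv n X (i + 1) j := by
  simp only [colInv, card_filter]
  rw [show n - i = n - (i + 1) + 1 by omega, sum_range_succ', add_comm]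
  simp only [add_zero, Nat.add_right_comm _ 1, ← add_assoc]

lemma diagCoinv_of_lt {i : ℕ} (j : ℕ) (hi : i < n) :
    diagCoinv n X i j =
      (if X i j = X (i + 1) (j + 1) then 1 else 0) + diagCoinv n X (i + 1) (j + 1) := by
  simp only [diagCoinv, card_filter]
  rw [show n - i = n - (i + 1) + 1 by omega, sum_range_succ', add_comm]
  simp only [add_zero, Nat.add_right_comm _ 1, ← add_assoc]

lemma colInv_antitone (j : ℕ) : Antitone (colInv n X · j) := by
  refine antitone_nat_of_succ_le fun i => ?_
  rcases lt_or_ge i n with hi | hi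
  · rw [colInv_of_lt n X j hi]
    omega
  · have := colInv_le n X (i + 1) j
    omega

lemma diagCoinv_add_le (i j s : ℕ) : diagCoinv n X (i + s) (j + s) ≤ diagCoinv n X i j := by
  suffices Antitone fun s => diagCoinv n X (i + s) (j + s) from this (Nat.zero_le s)
  refine antitone_nat_of_succ_le fun s => ?_
  simp only [← add_assoc]
  rcases lt_or_ge (i + s) n with hi | hi
  · rw [diagCoinv_of_lt n X (j + s) hi]
    omega
  · have := diagCoinv_le n X (i + s + 1) (j + s + 1)
    omega

lemma invCount_eq_sum_colInv : invCount n X = ∑ j ∈ range (n - 1), colInv n X (j + 1) (j + 1) :=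
  ncard_cells_eq_sum_cols n fun i j => X i j = X (i + 1) j

lemma coinvCount_eq_sum_diagCoinv :
    coinvCount n X = ∑ t ∈ range (n - 1), diagCoinv n X (t + 1) 1 :=
  ncard_cells_eq_sum_diags n fun i j => X i j = X (i + 1) (j + 1)

end Counts

section Interlacing

variable {n : ℕ} {X : ℕ → ℕ → ℤ} (hX : IsGT n X) (htop : ∀ j, 1 ≤ j → j ≤ n → X n j = j)
include hX htop

lemma le_add_diagCoinv {i j : ℕ} (hj : 1 ≤ j) (hji : j ≤ i) (hin : i ≤ n) :
    X i j ≤ j + diagCoinv n X i j := by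
  induction h : n - i generalizing i j with
  | zero =>
    obtain rfl : i = n := by omega
    simp [diagCoinv, htop j hj hji]
  | succ d ih =>
    have hstep := hX.2 i j hj hji (by omega)
    have hnext := ih (i := i + 1) (j := j + 1) (by omega) (by omega) (by omega) (by omega)
    rw [diagCoinv_of_lt n X j (by omega)]
    push_cast at hnext ⊢
    split_ifs <;> omega

lemma add_le_add_colInv {i j : ℕ} (hj : 1 ≤ j) (hji : j ≤ i) (hin : i ≤ n) :
    j + (n - i : ℕ) ≤ X i j + colInv n X i j := by
  induction h : n - i generalizing i with
  | zero =>
    obtain rfl : i = n := by omega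
    simp [colInv, htop j hj hji]
  | succ d ih =>
    have hstep := hX.2 i j hj hji (by omega)
    have hnext := ih (i := i + 1) (by omega) (by omega) (by omega)
    rw [colInv_of_lt n X j (by omega)]
    push_cast at hnext ⊢
    split_ifs <;> omega

lemma sub_le_colInv_add_diagCoinv {i j : ℕ} (hj : 1 ≤ j) (hji : j ≤ i) (hin : i ≤ n) :
    n - i ≤ colInv n X i j + diagCoinv n X i j := by
  have := le_add_diagCoinv hX htop hj hji hin
  have := add_le_add_colInv hX htop hj hji hin
  omega

lemma sub_le_diagCoinv {k : ℕ} (hinv : invCount n X ≤ k * (k + 1) / 2) (t : ℕ) :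
    n - 1 - k - t ≤ diagCoinv n X (t + 1) 1 := by
  set d := n - 1 - t - diagCoinv n X (t + 1) 1
  have hterm : ∀ j ∈ range (n - 1), d - j ≤ colInv n X (j + 1) (j + 1) := by
    intro j _
    by_cases hcell : t + 1 + j ≤ n
    · have hcount := sub_le_colInv_add_diagCoinv hX htop (i := t + 1 + j) (j := 1 + j)
        (by omega) (by omega) hcell
      have hdiag := diagCoinv_add_le n X (t + 1) 1 j
      have hcol : colInv n X (t + 1 + j) (1 + j) ≤ colInv n X (1 + j) (1 + j) :=
        colInv_antitone n X (1 + j) (by omega)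
      rw [Nat.add_comm 1 j] at hcount hdiag hcol
      omega
    · omega
  have hsum := sum_le_sum hterm
  rw [sum_range_const_tsub (by omega), ← invCount_eq_sum_colInv] at hsum
  have := le_of_mul_succ_div_two_le (hsum.trans hinv)
  omega

lemma sub_le_colInv {m : ℕ} (hcoinv : coinvCount n X ≤ m * (m + 1) / 2) (j : ℕ) :
    n - 1 - m - j ≤ colInv n X (j + 1) (j + 1) := by
  set d := n - 1 - j - colInv n X (j + 1) (j + 1)
  have hterm : ∀ t ∈ range (n - 1), d - t ≤ diagCoinv n X (t + 1) 1 := by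
    intro t _
    by_cases hcell : t + 1 + j ≤ n
    · have hcount := sub_le_colInv_add_diagCoinv hX htop (i := t + 1 + j) (j := 1 + j)
        (by omega) (by omega) hcell
      have hdiag := diagCoinv_add_le n X (t + 1) 1 j
      have hcol : colInv n X (t + 1 + j) (1 + j) ≤ colInv n X (1 + j) (1 + j) :=
        colInv_antitone n X (1 + j) (by omega)
      rw [Nat.add_comm 1 j] at hcount hdiag hcol
      omega
    · omega
  have hsum := sum_le_sum hterm
  rw [sum_range_const_tsub (by omega), ← coinvCount_eq_sum_diagCoinv] at hsum
  have := le_of_mul_succ_div_two_le (hsum.trans hcoinv)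
  omega

variable {k m : ℕ} (hkm : k + m + 1 = n) (hinv : invCount n X = k * (k + 1) / 2)
  (hcoinv : coinvCount n X = m * (m + 1) / 2)
include hkm hinv hcoinv

lemma diagCoinv_eq (t : ℕ) : diagCoinv n X (t + 1) 1 = m - t := by
  have hle : ∀ t ∈ range (n - 1), m - t ≤ diagCoinv n X (t + 1) 1 := fun t _ => by
    have := sub_le_diagCoinv hX htop hinv.le t
    omega
  rcases lt_or_ge t (n - 1) with ht | ht
  · refine ((sum_eq_sum_iff_of_le hle).1 ?_ t (mem_range.2 ht)).symm
    rw [sum_range_const_tsub (by omega), ← coinvCount_eq_sum_diagCoinv, hcoinv]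
  · have := diagCoinv_le n X (t + 1) 1
    omega

lemma colInv_eq (j : ℕ) : colInv n X (j + 1) (j + 1) = k - j := by
  have hle : ∀ j ∈ range (n - 1), k - j ≤ colInv n X (j + 1) (j + 1) := fun j _ => by
    have := sub_le_colInv hX htop hcoinv.le j
    omega
  rcases lt_or_ge j (n - 1) with hj | hj
  · refine ((sum_eq_sum_iff_of_le hle).1 ?_ j (mem_range.2 hj)).symm
    rw [sum_range_const_tsub (by omega), ← invCount_eq_sum_colInv, hinv]
  · have := colInv_le n X (j + 1) (j + 1)
    omega

theorem eq_of_invCount_of_coinvCount {i j : ℕ} (hj : 1 ≤ j) (hji : j ≤ i) (hin : i ≤ n) :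
    X i j = j + max 0 (min ((j : ℤ) + m - i) ((n : ℤ) - i)) := by
  have hupper := le_add_diagCoinv hX htop hj hji hin
  have hdiag := diagCoinv_add_le n X (i - j + 1) 1 (j - 1)
  rw [show i - j + 1 + (j - 1) = i by omega, show 1 + (j - 1) = j by omega,
    diagCoinv_eq hX htop hkm hinv hcoinv] at hdiag
  have hlower := add_le_add_colInv hX htop hj hji hin
  have hcol : colInv n X i j ≤ colInv n X (j - 1 + 1) (j - 1 + 1) :=
    colInv_antitone n X j (by omega) |>.trans_eq (by rw [Nat.sub_add_cancel hj])
  rw [colInv_eq hX htop hkm hinv hcoinv] at hcol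
  have := diagCoinv_le n X i j
  have := colInv_le n X i j
  omega

end Interlacing

-- Columns `j > n - 1 - m` are maximal (`j + n - i`), diagonals `i - j ≥ m` are minimal (`j`),
-- and `X i j = 2 j + m - i` in between.
def extremalGog (n m : ℕ) (i j : ℕ) : ℤ :=
  if 1 ≤ j ∧ j ≤ i ∧ i ≤ n then j + max 0 (min ((j : ℤ) + m - i) ((n : ℤ) - i)) else 0

section Extremal

variable {n m : ℕ}

lemma extremalGog_of_cell {i j : ℕ} (h : 1 ≤ j ∧ j ≤ i ∧ i ≤ n) :
    extremalGog n m i j = j + max 0 (min ((j : ℤ) + m - i) ((n : ℤ) - i)) :=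
  if_pos h

lemma extremalGog_of_not_cell {i j : ℕ} (h : ¬(1 ≤ j ∧ j ≤ i ∧ i ≤ n)) :
    extremalGog n m i j = 0 :=
  if_neg h

lemma isGog_extremalGog : IsGog n (extremalGog n m) := by
  refine ⟨⟨fun i j h1 h2 h3 => ?_, fun i j h1 h2 h3 => ?_⟩, fun i j h1 h2 h3 => ?_,
    fun j h1 h2 => ?_⟩
  all_goals simp only [extremalGog]; split_ifs <;> omega

lemma colInv_extremalGog (j : ℕ) :
    colInv n (extremalGog n m) (j + 1) (j + 1) = n - 1 - m - j := by
  have hfilter : {s ∈ range (n - (j + 1)) |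
      extremalGog n m (j + 1 + s) (j + 1) = extremalGog n m (j + 1 + s + 1) (j + 1)} =
      Ico m (n - (j + 1)) := by
    ext s
    rw [mem_filter, mem_range, mem_Ico]
    simp only [extremalGog]
    split_ifs <;> omega
  rw [colInv, hfilter, Nat.card_Ico]
  omega

lemma diagCoinv_extremalGog (hm : m < n) (t : ℕ) :
    diagCoinv n (extremalGog n m) (t + 1) 1 = m - t := by
  have hfilter : {s ∈ range (n - (t + 1)) | extremalGog n m (t + 1 + s) (1 + s) =
      extremalGog n m (t + 1 + s + 1) (1 + s + 1)} = Ico (n - 1 - m) (n - (t + 1)) := by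
    ext s
    rw [mem_filter, mem_range, mem_Ico]
    simp only [extremalGog]
    split_ifs <;> omega
  rw [diagCoinv, hfilter, Nat.card_Ico]
  omega

lemma invCount_extremalGog {k : ℕ} (hkm : k + m + 1 = n) :
    invCount n (extremalGog n m) = k * (k + 1) / 2 := by
  simp only [invCount_eq_sum_colInv, colInv_extremalGog, show n - 1 - m = k by omega]
  exact sum_range_const_tsub (by omega)

lemma coinvCount_extremalGog (hm : m < n) :
    coinvCount n (extremalGog n m) = m * (m + 1) / 2 := by
  simp only [coinvCount_eq_sum_diagCoinv, diagCoinv_extremalGog hm]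
  exact sum_range_const_tsub (by omega)

end Extremal

end GogTriangle

open GogTriangle

/-- There is exactly one Gog triangle of size `n` with `k(k+1)/2` inversions and
`(n-k-1)(n-k)/2` coinversions (uniqueness stated for triangles normalized to vanish
off the triangular domain), and its bottom entry is `n - k`. -/
theorem stmt13 (n k : ℕ) (hn : 1 ≤ n) (hk : k ≤ n - 1) :
    (∃! X : ℕ → ℕ → ℤ,
      (IsGog n X ∧ ∀ i j, ¬(1 ≤ j ∧ j ≤ i ∧ i ≤ n) → X i j = 0) ∧
      invCount n X = k * (k + 1) / 2 ∧
      coinvCount n X = (n - k - 1) * (n - k) / 2) ∧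
    ∀ X : ℕ → ℕ → ℤ, IsGog n X → invCount n X = k * (k + 1) / 2 →
      coinvCount n X = (n - k - 1) * (n - k) / 2 → X 1 1 = (n : ℤ) - k := by
  obtain ⟨m, hkm⟩ : ∃ m, k + m + 1 = n := ⟨n - 1 - k, by omega⟩
  rw [show n - k - 1 = m by omega, show n - k = m + 1 by omega]
  refine ⟨⟨extremalGog n m, ⟨⟨isGog_extremalGog, fun _ _ => extremalGog_of_not_cell⟩,
    invCount_extremalGog hkm, coinvCount_extremalGog (by omega)⟩, ?_⟩, ?_⟩
  · rintro Y ⟨⟨hY, hzero⟩, hinv, hcoinv⟩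
    funext i j
    by_cases hcell : 1 ≤ j ∧ j ≤ i ∧ i ≤ n
    · rw [extremalGog_of_cell hcell]
      exact eq_of_invCount_of_coinvCount hY.1 hY.2.2 hkm hinv hcoinv hcell.1 hcell.2.1 hcell.2.2
    · rw [hzero i j hcell, extremalGog_of_not_cell hcell]
  · intro Y hY hinv hcoinv
    rw [eq_of_invCount_of_coinvCount hY.1 hY.2.2 hkm hinv hcoinv le_rfl le_rfl hn]
    omega
end

section
/- Let n ≥ 1 and 0 ≤ k ≤ n−1. The triangular array X of size n defined by X_{i,j} = j for j ≤ i−n+k, X_{i,j} = n+j−i for j ≥ k+1, and X_{i,j} = n−k+2j−i−1 for i−n+k+1 ≤ j ≤ k, is a Gog triangle of size n with exactly k(k+1)/2 inversions and exactly (n−k−1)(n−k)/2 coinversions, and its bottom entry is X_{1,1} = n−k. -/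
theorem ncard_setOf_add_lt (m : ℕ) :
    {p : ℕ × ℕ | p.1 + p.2 < m}.ncard = m * (m + 1) / 2 := by
  have hset : {p : ℕ × ℕ | p.1 + p.2 < m} =
      ↑((Finset.range m).biUnion fun s => Finset.HasAntidiagonal.antidiagonal s) := by
    ext p
    simp
  have hdisj : (↑(Finset.range m) : Set ℕ).PairwiseDisjoint
      fun s => Finset.HasAntidiagonal.antidiagonal s := by
    intro a _ b _ hab
    simp only [Function.onFun, Finset.disjoint_left, Finset.HasAntidiagonal.mem_antidiagonal]
    omega
  have hgauss : ∑ s ∈ Finset.range m, (s + 1) = (m + 1) * m / 2 := by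
    simpa [Finset.sum_range_succ'] using Finset.sum_range_id (m + 1)
  rw [hset, Set.ncard_coe_finset, Finset.card_biUnion hdisj]
  simp only [Finset.Nat.card_antidiagonal]
  rw [hgauss, Nat.mul_comm]

theorem ncard_staircase (N s m : ℕ) (hm : m ≤ N) :
    {p : ℕ × ℕ | s ≤ p.2 ∧ p.1 < N ∧ p.2 + N ≤ p.1 + s + m}.ncard =
      m * (m + 1) / 2 := by
  have hset : {p : ℕ × ℕ | s ≤ p.2 ∧ p.1 < N ∧ p.2 + N ≤ p.1 + s + m} =
      (fun p : ℕ × ℕ => (N - 1 - p.1, p.2 + s)) '' {p | p.1 + p.2 < m} := by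
    ext ⟨i, j⟩
    simp only [Set.mem_ofPred_eq, Set.mem_image, Prod.mk.injEq, Prod.exists]
    constructor
    · rintro ⟨hs, hi, hj⟩
      exact ⟨N - 1 - i, j - s, by omega, by omega, by omega⟩
    · rintro ⟨a, b, hab, rfl, rfl⟩
      omega
  rw [hset, Set.InjOn.ncard_image, ncard_setOf_add_lt]
  rintro ⟨a, b⟩ hab ⟨a', b'⟩ hab' h
  simp only [Set.mem_ofPred_eq, Prod.mk.injEq] at hab hab' h
  ext <;> omega

section Diamond

variable (n k : ℕ)

def diamond (i j : ℕ) : ℤ :=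
  if (j : ℤ) ≤ (i : ℤ) - n + k then (j : ℤ)
  else if (k : ℤ) + 1 ≤ (j : ℤ) then (n : ℤ) + j - i
  else (n : ℤ) - k + 2 * j - i - 1

variable {n k}

theorem isGog_diamond : IsGog n (diamond n k) := by
  refine ⟨⟨fun i j _ _ _ => ?_, fun i j _ _ _ => ⟨?_, ?_⟩⟩,
    fun i j _ _ _ => ?_, fun j _ _ => ?_⟩ <;>
    simp only [diamond] <;> split_ifs <;> push_cast <;> omega

theorem diamond_eq_diamond_succ_iff {i j : ℕ} (hi : i < n) :
    diamond n k i j = diamond n k (i + 1) j ↔ j + n ≤ i + 1 + k := by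
  unfold diamond
  split_ifs <;> push_cast <;> omega

theorem diamond_eq_diamond_succ_succ_iff {i j : ℕ} (hi : i < n) :
    diamond n k i j = diamond n k (i + 1) (j + 1) ↔ k < j := by
  unfold diamond
  split_ifs <;> push_cast <;> omega

theorem invCount_diamond (hk : k < n) : invCount n (diamond n k) = k * (k + 1) / 2 := by
  rw [← ncard_staircase n 1 k hk.le, invCount]
  congr 1
  ext ⟨i, j⟩
  simp only [Set.mem_ofPred_eq]
  constructor
  · rintro ⟨hj, -, hi, heq⟩
    exact ⟨hj, hi, (diamond_eq_diamond_succ_iff hi).1 heq⟩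
  · rintro ⟨hj, hi, hle⟩
    have hji : j ≤ i := by omega
    exact ⟨hj, hji, hi, (diamond_eq_diamond_succ_iff hi).2 (by omega)⟩

theorem coinvCount_diamond (hk : k < n) :
    coinvCount n (diamond n k) = (n - k - 1) * (n - k) / 2 := by
  rw [show n - k = n - k - 1 + 1 by omega, Nat.add_sub_cancel,
    ← ncard_staircase n (k + 1) (n - k - 1) (by omega), coinvCount]
  congr 1
  ext ⟨i, j⟩
  simp only [Set.mem_ofPred_eq]
  constructor
  · rintro ⟨-, hji, hi, heq⟩
    exact ⟨(diamond_eq_diamond_succ_succ_iff hi).1 heq, hi, by omega⟩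
  · rintro ⟨hkj, hi, hle⟩
    have hji : j ≤ i := by omega
    exact ⟨by omega, hji, hi, (diamond_eq_diamond_succ_succ_iff hi).2 hkj⟩

theorem diamond_one_one (hk : k < n) : diamond n k 1 1 = n - k := by
  unfold diamond
  split_ifs <;> omega

end Diamond

section Congr

variable {n : ℕ} {X Y : ℕ → ℕ → ℤ}

theorem IsGog.of_eqOn (hY : IsGog n Y)
    (hXY : ∀ i j, 1 ≤ j → j ≤ i → i ≤ n → X i j = Y i j) : IsGog n X := by
  obtain ⟨⟨hpos, hgt⟩, hrow, htop⟩ := hY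
  refine ⟨⟨fun i j h1 h2 h3 => ?_, fun i j h1 h2 h3 => ?_⟩,
    fun i j h1 h2 h3 => ?_, fun j h1 h2 => ?_⟩
  · rw [hXY i j h1 h2 h3]
    exact hpos i j h1 h2 h3
  · rw [hXY i j h1 h2 (by omega), hXY (i + 1) j h1 (by omega) h3,
      hXY (i + 1) (j + 1) (by omega) (by omega) h3]
    exact hgt i j h1 h2 h3
  · rw [hXY i j h1 (by omega) h3, hXY i (j + 1) (by omega) h2 h3]
    exact hrow i j h1 h2 h3
  · rw [hXY n j h1 h2 le_rfl]
    exact htop j h1 h2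

theorem invCount_congr (hXY : ∀ i j, 1 ≤ j → j ≤ i → i ≤ n → X i j = Y i j) :
    invCount n X = invCount n Y := by
  unfold invCount
  congr 1
  ext ⟨i, j⟩
  simp only [Set.mem_ofPred_eq]
  refine and_congr_right fun h1 => and_congr_right fun h2 => and_congr_right fun h3 => ?_
  rw [hXY i j h1 h2 (by omega), hXY (i + 1) j h1 (by omega) h3]

theorem coinvCount_congr (hXY : ∀ i j, 1 ≤ j → j ≤ i → i ≤ n → X i j = Y i j) :
    coinvCount n X = coinvCount n Y := by
  unfold coinvCount
  congr 1
  ext ⟨i, j⟩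
  simp only [Set.mem_ofPred_eq]
  refine and_congr_right fun h1 => and_congr_right fun h2 => and_congr_right fun h3 => ?_
  rw [hXY i j h1 h2 (by omega), hXY (i + 1) (j + 1) (by omega) (by omega) h3]

end Congr

/-- The explicit "diamond" triangle: `X i j = j` for `j ≤ i - n + k`, `X i j = n + j - i`
for `j ≥ k + 1`, and `X i j = n - k + 2j - i - 1` otherwise, is a Gog triangle of size
`n` with exactly `k(k+1)/2` inversions, exactly `(n-k-1)(n-k)/2` coinversions, and
bottom entry `n - k`. -/
theorem stmt14 (n k : ℕ) (hn : 1 ≤ n) (hk : k ≤ n - 1) (X : ℕ → ℕ → ℤ)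
    (hX : ∀ i j, 1 ≤ j → j ≤ i → i ≤ n → X i j =
      if (j : ℤ) ≤ (i : ℤ) - n + k then (j : ℤ)
      else if (k : ℤ) + 1 ≤ (j : ℤ) then (n : ℤ) + j - i
      else (n : ℤ) - k + 2 * j - i - 1) :
    IsGog n X ∧ invCount n X = k * (k + 1) / 2 ∧
      coinvCount n X = (n - k - 1) * (n - k) / 2 ∧ X 1 1 = (n : ℤ) - k := by
  have hkn : k < n := by omega
  have hXd : ∀ i j, 1 ≤ j → j ≤ i → i ≤ n → X i j = diamond n k i j := hX
  exact ⟨isGog_diamond.of_eqOn hXd,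
    (invCount_congr hXd).trans (invCount_diamond hkn),
    (coinvCount_congr hXd).trans (coinvCount_diamond hkn),
    (hXd 1 1 le_rfl le_rfl hn).trans (diamond_one_one hkn)⟩
end

section
/- Let n ≥ 3 and let a, b, c, d, e, f be positive integers forming a Gelfand-Tsetlin triangle of size 3 with bottom entry c, middle row (b, e), and top row (a, d, f), i.e. a ≤ b ≤ d ≤ e ≤ f and b ≤ c ≤ e. Then this triangle arises as the bottom three rows of some Gog triangle of size n (i.e. it is an (n,3,3,3) Gog pentagon) if and only if a < d < f, b < e, and f ≤ n. -/
/-! Rows `1, …, m` of a Gog triangle of size `n ≥ m` form a Gelfand-Tsetlin triangle of size `m`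
with strictly increasing rows, and its last entry `X m m` is at most `X n n = n` because the
diagonal of a Gelfand-Tsetlin triangle is weakly increasing. Conversely such a triangle `Y` with
`Y m m ≤ n` extends to a Gog triangle of size `n`: prolong row `m` to an infinite strictly
increasing row `w`, and take `max j (w j - k)` as the `j`-th entry of row `m + k`. For a triangle of
size `3` the conditions are exactly the displayed inequalities. -/

def IsStrictGT (m : ℕ) (X : ℕ → ℕ → ℤ) : Prop :=
  IsGT m X ∧ ∀ i j, 1 ≤ j → j + 1 ≤ i → i ≤ m → X i j < X i (j+1)

theorem IsGT.mono {m n : ℕ} {X : ℕ → ℕ → ℤ} (hX : IsGT n X) (hmn : m ≤ n) : IsGT m X :=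
  ⟨fun i j hj hji hi => hX.1 i j hj hji (hi.trans hmn),
    fun i j hj hji hi => hX.2 i j hj hji (hi.trans hmn)⟩

theorem IsGT.diag_le_diag {n : ℕ} {X : ℕ → ℕ → ℤ} (hX : IsGT n X) {i k : ℕ} (hi : 1 ≤ i)
    (hik : i ≤ k) (hk : k ≤ n) : X i i ≤ X k k := by
  induction k, hik using Nat.le_induction with
  | base => rfl
  | succ k hik ih => exact (ih (by omega)).trans (hX.2 k k (by omega) le_rfl hk).2

theorem IsGog.isStrictGT {m n : ℕ} {X : ℕ → ℕ → ℤ} (hX : IsGog n X) (hmn : m ≤ n) :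
    IsStrictGT m X :=
  ⟨hX.1.mono hmn, fun i j hj hji hi => hX.2.1 i j hj hji (hi.trans hmn)⟩

theorem IsGog.diag_le {n : ℕ} {X : ℕ → ℕ → ℤ} (hX : IsGog n X) {i : ℕ} (hi : 1 ≤ i)
    (hin : i ≤ n) : X i i ≤ n := by
  simpa [hX.2.2 n (by omega) le_rfl] using hX.1.diag_le_diag hi hin le_rfl

namespace IsStrictGT

variable {m : ℕ} {Y : ℕ → ℕ → ℤ}

theorem add_le_row (hY : IsStrictGT m Y) {j : ℕ} (hj : 1 ≤ j) {k : ℕ} (hjk : j + k ≤ m) :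
    Y m j + k ≤ Y m (j + k) := by
  induction k with
  | zero => simp
  | succ k ih =>
    have := hY.2 m (j + k) (by omega) (by omega) le_rfl
    rw [← add_assoc]
    push_cast
    omega

theorem le_row (hY : IsStrictGT m Y) {j : ℕ} (hj : 1 ≤ j) (hjm : j ≤ m) : (j : ℤ) ≤ Y m j := by
  have hrow := hY.add_le_row le_rfl (k := j - 1) (by omega)
  rw [show 1 + (j - 1) = j by omega] at hrow
  have := hY.1.1 m 1 le_rfl (by omega) le_rfl
  omega

end IsStrictGT

def liftRow (w : ℕ → ℤ) (k j : ℕ) : ℤ := max (j : ℤ) (w j - k)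

section liftRow

variable {w : ℕ → ℤ} {j : ℕ}

theorem le_liftRow (k : ℕ) : (j : ℤ) ≤ liftRow w k j := le_max_left _ _

theorem liftRow_lt_liftRow_succ (h : w j < w (j + 1)) (k : ℕ) :
    liftRow w k j < liftRow w k (j + 1) := by
  unfold liftRow; push_cast; omega

theorem liftRow_succ_le (k : ℕ) : liftRow w (k + 1) j ≤ liftRow w k j := by
  unfold liftRow; push_cast; omega

theorem liftRow_le_liftRow_succ_succ (h : w j < w (j + 1)) (k : ℕ) :
    liftRow w k j ≤ liftRow w (k + 1) (j + 1) := by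
  unfold liftRow; push_cast; omega

theorem liftRow_zero (h : (j : ℤ) ≤ w j) : liftRow w 0 j = w j := by
  unfold liftRow; omega

theorem liftRow_eq_of_le {k : ℕ} (h : w j ≤ j + k) : liftRow w k j = j := by
  unfold liftRow; omega

end liftRow

def extendRow (v : ℕ → ℤ) (m j : ℕ) : ℤ := if j ≤ m then v j else v m + ((j : ℤ) - m)

namespace IsStrictGT

variable {m : ℕ} {Y : ℕ → ℕ → ℤ} {j : ℕ}

theorem extendRow_lt_extendRow_succ (hY : IsStrictGT m Y) (hj : 1 ≤ j) :
    extendRow (Y m) m j < extendRow (Y m) m (j + 1) := by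
  unfold extendRow
  split_ifs with h₁ h₂
  · exact hY.2 m j hj h₂ le_rfl
  · obtain rfl : j = m := by omega
    push_cast; omega
  · omega
  · push_cast; omega

theorem le_extendRow (hY : IsStrictGT m Y) (hm : 1 ≤ m) (hj : 1 ≤ j) :
    (j : ℤ) ≤ extendRow (Y m) m j := by
  have := hY.le_row hm le_rfl
  unfold extendRow
  split_ifs with h
  · exact hY.le_row hj h
  · omega

theorem extendRow_le (hY : IsStrictGT m Y) {k : ℕ} (hYk : Y m m ≤ m + k) (hj : 1 ≤ j) :
    extendRow (Y m) m j ≤ j + k := by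
  unfold extendRow
  split_ifs with h
  · have hrow := hY.add_le_row hj (k := m - j) (by omega)
    rw [show j + (m - j) = m by omega] at hrow
    push_cast [h] at hrow
    omega
  · omega

end IsStrictGT

def gogExtension (m : ℕ) (Y : ℕ → ℕ → ℤ) (i j : ℕ) : ℤ :=
  if i < m then Y i j else liftRow (extendRow (Y m) m) (i - m) j

namespace IsStrictGT

variable {m : ℕ} {Y : ℕ → ℕ → ℤ}

theorem gogExtension_eq (hY : IsStrictGT m Y) {i j : ℕ} (hj : 1 ≤ j) (hji : j ≤ i) (him : i ≤ m) :
    gogExtension m Y i j = Y i j := by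
  unfold gogExtension
  split_ifs with h
  · rfl
  · obtain rfl : i = m := by omega
    rw [Nat.sub_self, liftRow_zero (hY.le_extendRow (by omega) hj), extendRow, if_pos hji]

theorem gogExtension_interlace (hY : IsStrictGT m Y) {i j : ℕ} (hj : 1 ≤ j)
    (hji : j ≤ i) :
    gogExtension m Y (i + 1) j ≤ gogExtension m Y i j ∧
      gogExtension m Y i j ≤ gogExtension m Y (i + 1) (j + 1) := by
  rcases Nat.lt_or_ge i m with him | him
  · rw [hY.gogExtension_eq hj (by omega) him, hY.gogExtension_eq hj hji him.le,
      hY.gogExtension_eq (by omega) (by omega) him]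
    exact hY.1.2 i j hj hji him
  · have hw := hY.extendRow_lt_extendRow_succ hj
    simp only [gogExtension, if_neg (by omega : ¬ i < m), if_neg (by omega : ¬ i + 1 < m),
      show i + 1 - m = i - m + 1 by omega]
    exact ⟨liftRow_succ_le _, liftRow_le_liftRow_succ_succ hw _⟩

theorem isGog_gogExtension (hY : IsStrictGT m Y) {n : ℕ} (hmn : m ≤ n)
    (hYn : Y m m ≤ n) : IsGog n (gogExtension m Y) := by
  refine ⟨⟨fun i j hj hji hin => ?_, fun i j hj hji hin => ?_⟩, fun i j hj hji hin => ?_,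
    fun j hj hjn => ?_⟩
  · by_cases him : i < m
    · rw [hY.gogExtension_eq hj hji him.le]
      exact hY.1.1 i j hj hji him.le
    · simp only [gogExtension, if_neg him]
      exact le_trans (by exact_mod_cast hj) (le_liftRow _)
  · exact hY.gogExtension_interlace hj hji
  · by_cases him : i < m
    · rw [hY.gogExtension_eq hj (by omega) him.le, hY.gogExtension_eq (by omega) hji him.le]
      exact hY.2 i j hj hji him.le
    · simp only [gogExtension, if_neg him]
      exact liftRow_lt_liftRow_succ (hY.extendRow_lt_extendRow_succ hj) _
  · have hYk : Y m m ≤ m + ((n - m : ℕ) : ℤ) := by omega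
    simp only [gogExtension, if_neg (by omega : ¬ n < m)]
    exact liftRow_eq_of_le (hY.extendRow_le hYk hj)

end IsStrictGT

theorem isStrictGT_three_iff {X : ℕ → ℕ → ℤ} :
    IsStrictGT 3 X ↔
      1 ≤ X 3 1 ∧ X 3 1 ≤ X 2 1 ∧ X 2 1 ≤ X 3 2 ∧ X 3 2 ≤ X 2 2 ∧ X 2 2 ≤ X 3 3 ∧
        X 2 1 ≤ X 1 1 ∧ X 1 1 ≤ X 2 2 ∧ X 3 1 < X 3 2 ∧ X 3 2 < X 3 3 ∧ X 2 1 < X 2 2 := by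
  constructor
  · rintro ⟨⟨hpos, hGT⟩, hrow⟩
    obtain ⟨h31, h21⟩ := hGT 2 1 le_rfl (by norm_num) le_rfl
    obtain ⟨h32, h22⟩ := hGT 2 2 (by norm_num) le_rfl le_rfl
    obtain ⟨h21', h11⟩ := hGT 1 1 le_rfl le_rfl (by norm_num)
    exact ⟨hpos 3 1 le_rfl (by norm_num) le_rfl, h31, h21, h32, h22, h21', h11,
      hrow 3 1 le_rfl (by norm_num) le_rfl, hrow 3 2 (by norm_num) le_rfl le_rfl,
      hrow 2 1 le_rfl le_rfl (by norm_num)⟩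
  · rintro ⟨_, _, _, _, _, _, _, _, _, _⟩
    refine ⟨⟨fun i j hj hji hi => ?_, fun i j hj hji hi => ?_⟩, fun i j hj hji hi => ?_⟩ <;>
      (have : i ≤ 3 := by omega
       have : j ≤ 3 := by omega
       interval_cases i <;> interval_cases j <;> (try simp only [Nat.reduceAdd]) <;> omega)

def gogPentagon (a b c d e f : ℤ) : ℕ → ℕ → ℤ
  | 1, _ => c
  | 2, 1 => b
  | 2, _ => e
  | 3, 1 => a
  | 3, 2 => d
  | _, _ => f -- the entry `(3, 3)`; entries outside the triangle play no role

/-- Characterization of `(n,3,3,3)` Gog pentagons: a Gelfand-Tsetlin triangle of size 3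
(bottom `c`, middle row `(b,e)`, top row `(a,d,f)`) is the bottom three rows of a Gog
triangle of size `n` iff `a < d`, `d < f`, `b < e` and `f ≤ n`. -/
theorem stmt18 (n : ℕ) (hn : 3 ≤ n) (a b c d e f : ℤ)
    (ha : 1 ≤ a) (hab : a ≤ b) (hbd : b ≤ d) (hde : d ≤ e) (hef : e ≤ f)
    (hbc : b ≤ c) (hce : c ≤ e) :
    (∃ X : ℕ → ℕ → ℤ, IsGog n X ∧ X 1 1 = c ∧ X 2 1 = b ∧ X 2 2 = e ∧
      X 3 1 = a ∧ X 3 2 = d ∧ X 3 3 = f) ↔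
    (a < d ∧ d < f ∧ b < e ∧ f ≤ (n : ℤ)) := by
  constructor
  · rintro ⟨X, hX, rfl, rfl, rfl, rfl, rfl, rfl⟩
    obtain ⟨-, -, -, -, -, -, -, had, hdf, hbe⟩ := isStrictGT_three_iff.mp (hX.isStrictGT hn)
    exact ⟨had, hdf, hbe, hX.diag_le (by norm_num) hn⟩
  · rintro ⟨had, hdf, hbe, hfn⟩
    have hY : IsStrictGT 3 (gogPentagon a b c d e f) :=
      isStrictGT_three_iff.mpr ⟨ha, hab, hbd, hde, hef, hbc, hce, had, hdf, hbe⟩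
    refine ⟨_, hY.isGog_gogExtension hn hfn, ?_, ?_, ?_, ?_, ?_, ?_⟩ <;>
      exact hY.gogExtension_eq (by norm_num) (by norm_num) (by norm_num)
end
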